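/- arXiv:1804.03277 — 7 statements merged into one kernel-verified Lean document; each statement's English description precedes it below -/
import Mathlib

section
/- Let f be a bounded, nonnegative, measurable function on a measure space (Ω, F, μ). Then ‖f‖₂² / √(‖f‖₁ ‖f‖_∞) ≤ sup over measurable sets S of finite positive measure of (1/√(μ(S))) ∫_S f dμ ≤ ‖f‖₂. -/
/-!
The upper bound is Cauchy–Schwarz on `S`: `∫_S f ≤ ‖f‖₂ √μ(S)`. For the lower bound let `V` be the
supremum, so that `∫_{f > t} f ≤ V √μ(f > t)` for every `t > 0`. The layer-cake formula for the
measure `f dμ` gives `‖f‖₂² = ∫_0^∞ ∫_{f > t} f dμ dt ≤ V ∫_0^{‖f‖_∞} √μ(f > t) dt`, and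
Cauchy–Schwarz in `t` together with the layer-cake formula `∫_0^∞ μ(f > t) dt = ‖f‖₁` bounds the
last integral by `√(‖f‖_∞ ‖f‖₁)`.
-/

open MeasureTheory ENNReal Set

section

variable {Ω : Type*} [MeasurableSpace Ω] {μ : Measure Ω} {f : Ω → ℝ}

theorem eLpNorm_two_sq_eq_lintegral_ofReal_sq (hf0 : 0 ≤ᵐ[μ] f) :
    eLpNorm f 2 μ ^ 2 = ∫⁻ x, ENNReal.ofReal (f x) ^ 2 ∂μ := by
  have := eLpNorm_nnreal_pow_eq_lintegral (f := f) (μ := μ) (p := 2) two_ne_zero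
  simp only [coe_ofNat, NNReal.coe_ofNat, rpow_two] at this
  rw [this]
  exact lintegral_congr_ae (hf0.mono fun x hx ↦ by simp only [Real.enorm_eq_ofReal hx])

theorem eLpNorm_one_eq_lintegral_ofReal (hf0 : 0 ≤ᵐ[μ] f) :
    eLpNorm f 1 μ = ∫⁻ x, ENNReal.ofReal (f x) ∂μ := by
  rw [eLpNorm_one_eq_lintegral_enorm]
  exact lintegral_congr_ae (hf0.mono fun x hx ↦ Real.enorm_eq_ofReal hx)

theorem ae_le_toReal_eLpNorm_top (hf : MemLp f ∞ μ) :
    ∀ᵐ x ∂μ, f x ≤ (eLpNorm f ∞ μ).toReal := by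
  rw [toReal_eLpNorm hf.aestronglyMeasurable]
  exact (ae_le_lpNorm_exponent_top hf).mono fun x hx ↦ (Real.le_norm_self _).trans hx

theorem setIntegral_le_eLpNorm_two_mul_sqrt (hf : MemLp f 2 μ) {S : Set Ω} (hS : μ S < ∞) :
    ∫ x in S, f x ∂μ ≤ (eLpNorm f 2 μ).toReal * √(μ S).toReal := by
  have hCS : ‖∫ x in S, f x ∂μ‖ₑ ≤ eLpNorm f 2 μ * μ S ^ (1 / 2 : ℝ) := calc
    ‖∫ x in S, f x ∂μ‖ₑ ≤ eLpNorm f 1 (μ.restrict S) := by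
      rw [eLpNorm_one_eq_lintegral_enorm]; exact enorm_integral_le_lintegral_enorm _
    _ ≤ eLpNorm f 2 (μ.restrict S) * μ S ^ (1 / 2 : ℝ) := by
      have := eLpNorm_le_eLpNorm_mul_rpow_measure_univ (p := 1) (q := 2) one_le_two
        hf.aestronglyMeasurable.restrict (μ := μ.restrict S)
      norm_num at this ⊢
      exact this
    _ ≤ eLpNorm f 2 μ * μ S ^ (1 / 2 : ℝ) := by gcongr; exact Measure.restrict_le_self
  calc ∫ x in S, f x ∂μ ≤ ‖∫ x in S, f x ∂μ‖ := Real.le_norm_self _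
    _ ≤ (eLpNorm f 2 μ * μ S ^ (1 / 2 : ℝ)).toReal := by
      rw [← toReal_enorm]
      exact toReal_mono
        (mul_ne_top hf.eLpNorm_ne_top (rpow_ne_top_of_nonneg (by norm_num) hS.ne)) hCS
    _ = _ := by rw [toReal_mul, ← toReal_rpow, Real.sqrt_eq_rpow]

theorem lintegral_mul_ofReal_eq_lintegral_setLIntegral_gt {g : Ω → ℝ≥0∞} (hg : Measurable g)
    (hf : Measurable f) (hf0 : 0 ≤ᵐ[μ] f) :
    ∫⁻ x, g x * ENNReal.ofReal (f x) ∂μ = ∫⁻ t in Ioi 0, ∫⁻ x in {x | t < f x}, g x ∂μ := calc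
  _ = ∫⁻ x, ENNReal.ofReal (f x) ∂μ.withDensity g :=
    (lintegral_withDensity_eq_lintegral_mul μ hg hf.ennreal_ofReal).symm
  _ = ∫⁻ t in Ioi 0, μ.withDensity g {x | t < f x} :=
    lintegral_eq_lintegral_meas_lt _ (withDensity_absolutelyContinuous μ g hf0) hf.aemeasurable
  _ = _ := lintegral_congr fun _ ↦ withDensity_apply g (measurableSet_lt measurable_const hf)

theorem measure_gt_eq_zero_of_ae_le {M t : ℝ} (hfM : ∀ᵐ x ∂μ, f x ≤ M) (ht : M < t) :
    μ {x | t < f x} = 0 :=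
  measure_mono_null (fun x (hx : t < f x) (hxM : f x ≤ M) ↦ (ht.trans hx).not_ge hxM)
    (ae_iff.mp hfM)

theorem setLIntegral_Ioi_le_setLIntegral_Ioc {φ : ℝ → ℝ≥0∞} {a b : ℝ}
    (hφ : ∀ t, b < t → φ t = 0) : ∫⁻ t in Ioi a, φ t ≤ ∫⁻ t in Ioc a b, φ t := calc
  ∫⁻ t in Ioi a, φ t ≤ ∫⁻ t in Ioc a b ∪ Ioi b, φ t :=
    lintegral_mono_set fun t ht ↦ (le_or_gt t b).imp (fun htb ↦ ⟨ht, htb⟩) id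
  _ ≤ (∫⁻ t in Ioc a b, φ t) + ∫⁻ t in Ioi b, φ t := lintegral_union_le _ _ _
  _ = ∫⁻ t in Ioc a b, φ t := by rw [setLIntegral_eq_zero measurableSet_Ioi hφ, add_zero]

theorem setLIntegral_Ioi_zero_sqrt_measure_gt_le (hf : Measurable f) (hf0 : 0 ≤ᵐ[μ] f) {M : ℝ}
    (hfM : ∀ᵐ x ∂μ, f x ≤ M) :
    ∫⁻ t in Ioi 0, μ {x | t < f x} ^ (1 / 2 : ℝ) ≤
      (ENNReal.ofReal M * ∫⁻ x, ENNReal.ofReal (f x) ∂μ) ^ (1 / 2 : ℝ) := by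
  have hmeas : Measurable fun t : ℝ ↦ μ {x | t < f x} :=
    Antitone.measurable fun s t hst ↦ measure_mono fun x hx ↦ hst.trans_lt hx
  calc ∫⁻ t in Ioi 0, μ {x | t < f x} ^ (1 / 2 : ℝ)
      ≤ ∫⁻ t in Ioc 0 M, μ {x | t < f x} ^ (1 / 2 : ℝ) * 1 ^ (1 / 2 : ℝ) := by
        simp only [one_rpow, mul_one]
        exact setLIntegral_Ioi_le_setLIntegral_Ioc fun t ht ↦ by
          simp [measure_gt_eq_zero_of_ae_le hfM ht]
    _ ≤ (∫⁻ t in Ioc 0 M, μ {x | t < f x}) ^ (1 / 2 : ℝ) * (∫⁻ _ in Ioc 0 M, 1) ^ (1 / 2 : ℝ) :=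
        lintegral_mul_norm_pow_le hmeas.aemeasurable aemeasurable_const (by norm_num)
          (by norm_num) (by norm_num)
    _ ≤ (∫⁻ t in Ioi 0, μ {x | t < f x}) ^ (1 / 2 : ℝ) * ENNReal.ofReal M ^ (1 / 2 : ℝ) := by
        rw [setLIntegral_const, one_mul, Real.volume_Ioc, sub_zero]
        gcongr ?_ ^ _ * _
        exact lintegral_mono_set Ioc_subset_Ioi_self
    _ = _ := by
        rw [← lintegral_eq_lintegral_meas_lt μ hf0 hf.aemeasurable, mul_comm,
          mul_rpow_of_nonneg _ _ (by norm_num)]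

theorem lintegral_ofReal_sq_le (hf : Measurable f) (hf0 : 0 ≤ᵐ[μ] f) {M : ℝ}
    (hfM : ∀ᵐ x ∂μ, f x ≤ M) {C : ℝ≥0∞} (hC : C ≠ ∞)
    (hlevel : ∀ t > 0, ∫⁻ x in {x | t < f x}, ENNReal.ofReal (f x) ∂μ ≤
      C * μ {x | t < f x} ^ (1 / 2 : ℝ)) :
    ∫⁻ x, ENNReal.ofReal (f x) ^ 2 ∂μ ≤
      C * (ENNReal.ofReal M * ∫⁻ x, ENNReal.ofReal (f x) ∂μ) ^ (1 / 2 : ℝ) := calc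
  ∫⁻ x, ENNReal.ofReal (f x) ^ 2 ∂μ
      = ∫⁻ t in Ioi 0, ∫⁻ x in {x | t < f x}, ENNReal.ofReal (f x) ∂μ := by
        simp_rw [sq]
        exact lintegral_mul_ofReal_eq_lintegral_setLIntegral_gt hf.ennreal_ofReal hf hf0
    _ ≤ ∫⁻ t in Ioi 0, C * μ {x | t < f x} ^ (1 / 2 : ℝ) :=
        setLIntegral_mono' measurableSet_Ioi hlevel
    _ = C * ∫⁻ t in Ioi 0, μ {x | t < f x} ^ (1 / 2 : ℝ) := lintegral_const_mul' _ _ hC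
    _ ≤ _ := by gcongr; exact setLIntegral_Ioi_zero_sqrt_measure_gt_le hf hf0 hfM

theorem toReal_eLpNorm_two_sq_le_of_setIntegral_le (hf : Measurable f) (hf0 : 0 ≤ᵐ[μ] f)
    (hf_bdd : MemLp f ∞ μ) (hf1 : MemLp f 1 μ) {c : ℝ} (hc : 0 ≤ c)
    (hS : ∀ S, MeasurableSet S → μ S < ∞ → ∫ x in S, f x ∂μ ≤ c * √(μ S).toReal) :
    (eLpNorm f 2 μ).toReal ^ 2 ≤ c * √((eLpNorm f 1 μ).toReal * (eLpNorm f ∞ μ).toReal) := by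
  have hlevel : ∀ t > 0, ∫⁻ x in {x | t < f x}, ENNReal.ofReal (f x) ∂μ ≤
      ENNReal.ofReal c * μ {x | t < f x} ^ (1 / 2 : ℝ) := by
    intro t ht
    have hint : Integrable f μ := memLp_one_iff_integrable.mp hf1
    have hfin := hint.measure_gt_lt_top ht
    rw [← ofReal_integral_eq_lintegral_ofReal hint.integrableOn (ae_restrict_of_ae hf0),
      ← ofReal_toReal hfin.ne, ofReal_rpow_of_nonneg toReal_nonneg (by norm_num),
      ← Real.sqrt_eq_rpow, ← ofReal_mul hc]
    exact ofReal_le_ofReal (hS _ (measurableSet_lt measurable_const hf) hfin)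
  have key := lintegral_ofReal_sq_le hf hf0 (ae_le_toReal_eLpNorm_top hf_bdd) ofReal_ne_top hlevel
  rw [← eLpNorm_two_sq_eq_lintegral_ofReal_sq hf0, ← eLpNorm_one_eq_lintegral_ofReal hf0,
    ofReal_toReal hf_bdd.eLpNorm_ne_top] at key
  have hfin : ENNReal.ofReal c * (eLpNorm f ∞ μ * eLpNorm f 1 μ) ^ (1 / 2 : ℝ) ≠ ∞ :=
    mul_ne_top ofReal_ne_top
      (rpow_ne_top_of_nonneg (by norm_num) (mul_ne_top hf_bdd.eLpNorm_ne_top hf1.eLpNorm_ne_top))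
  simpa [toReal_mul, toReal_pow, ← toReal_rpow, toReal_ofReal hc, Real.sqrt_eq_rpow, mul_comm]
    using toReal_mono hfin key

def sqrtNormalizedSetIntegrals (μ : Measure Ω) (f : Ω → ℝ) : Set ℝ :=
  {r | ∃ S : Set Ω, MeasurableSet S ∧ 0 < μ S ∧ μ S < ⊤ ∧
    r = (∫ x in S, f x ∂μ) / Real.sqrt (μ S).toReal}

theorem le_toReal_eLpNorm_two_of_mem_sqrtNormalizedSetIntegrals (hf : MemLp f 2 μ) {r : ℝ}
    (hr : r ∈ sqrtNormalizedSetIntegrals μ f) : r ≤ (eLpNorm f 2 μ).toReal := by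
  obtain ⟨S, -, -, hS, rfl⟩ := hr
  exact div_le_of_le_mul₀ (Real.sqrt_nonneg _) toReal_nonneg
    (setIntegral_le_eLpNorm_two_mul_sqrt hf hS)

theorem sSup_sqrtNormalizedSetIntegrals_le (hf : MemLp f 2 μ) :
    sSup (sqrtNormalizedSetIntegrals μ f) ≤ (eLpNorm f 2 μ).toReal :=
  Real.sSup_le (fun _ ↦ le_toReal_eLpNorm_two_of_mem_sqrtNormalizedSetIntegrals hf) toReal_nonneg

theorem sSup_sqrtNormalizedSetIntegrals_nonneg (hf0 : 0 ≤ᵐ[μ] f) :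
    0 ≤ sSup (sqrtNormalizedSetIntegrals μ f) := by
  refine Real.sSup_nonneg fun r ⟨S, _, _, _, hr⟩ ↦ hr ▸ div_nonneg ?_ (Real.sqrt_nonneg _)
  exact integral_nonneg_of_ae (ae_restrict_of_ae hf0)

theorem setIntegral_le_sSup_sqrtNormalizedSetIntegrals_mul_sqrt (hf0 : 0 ≤ᵐ[μ] f)
    (hf : MemLp f 2 μ) {S : Set Ω} (hSm : MeasurableSet S) (hS : μ S < ∞) :
    ∫ x in S, f x ∂μ ≤ sSup (sqrtNormalizedSetIntegrals μ f) * √(μ S).toReal := by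
  rcases eq_zero_or_pos (μ S) with hS0 | hS0
  · rw [setIntegral_measure_zero _ hS0]
    exact mul_nonneg (sSup_sqrtNormalizedSetIntegrals_nonneg hf0) (Real.sqrt_nonneg _)
  · have hmem : (∫ x in S, f x ∂μ) / √(μ S).toReal ∈ sqrtNormalizedSetIntegrals μ f :=
      ⟨S, hSm, hS0, hS, rfl⟩
    have hbdd : BddAbove (sqrtNormalizedSetIntegrals μ f) :=
      ⟨_, fun _ ↦ le_toReal_eLpNorm_two_of_mem_sqrtNormalizedSetIntegrals hf⟩
    exact (div_le_iff₀ (Real.sqrt_pos.mpr (toReal_pos hS0.ne' hS.ne))).mp (le_csSup hbdd hmem)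

end

/-- For a bounded, nonnegative, measurable function `f` in `L¹ ∩ L²` on a
measure space `(Ω, ℱ, μ)`, one has
`‖f‖₂² / √(‖f‖₁ ‖f‖_∞) ≤ sup_{S : 0 < μ S < ∞} (∫_S f dμ) / √(μ S) ≤ ‖f‖₂`. -/
theorem stmt0 {Ω : Type*} [MeasurableSpace Ω] (μ : Measure Ω) (f : Ω → ℝ)
    (hf : Measurable f) (hf0 : ∀ x, 0 ≤ f x)
    (hf_bdd : MemLp f ⊤ μ) (hf1 : MemLp f 1 μ) (hf2 : MemLp f 2 μ) :
    (eLpNorm f 2 μ).toReal ^ 2 /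
        Real.sqrt ((eLpNorm f 1 μ).toReal * (eLpNorm f ⊤ μ).toReal) ≤
      sSup {r : ℝ | ∃ S : Set Ω, MeasurableSet S ∧ 0 < μ S ∧ μ S < ⊤ ∧
        r = (∫ x in S, f x ∂μ) / Real.sqrt (μ S).toReal} ∧
    sSup {r : ℝ | ∃ S : Set Ω, MeasurableSet S ∧ 0 < μ S ∧ μ S < ⊤ ∧
        r = (∫ x in S, f x ∂μ) / Real.sqrt (μ S).toReal} ≤ (eLpNorm f 2 μ).toReal := by
  have hf0' : 0 ≤ᵐ[μ] f := ae_of_all μ hf0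
  refine ⟨div_le_of_le_mul₀ (Real.sqrt_nonneg _) (sSup_sqrtNormalizedSetIntegrals_nonneg hf0') ?_,
    sSup_sqrtNormalizedSetIntegrals_le hf2⟩
  exact toReal_eLpNorm_two_sq_le_of_setIntegral_le hf hf0' hf_bdd hf1
    (sSup_sqrtNormalizedSetIntegrals_nonneg hf0')
    fun S hSm hS ↦ setIntegral_le_sSup_sqrtNormalizedSetIntegrals_mul_sqrt hf0' hf2 hSm hS
end

section
/- Let f be a bounded, measurable (not necessarily nonnegative) function on a measure space (Ω, F, μ). Then ‖f‖₂² / √(2 ‖f‖₁ ‖f‖_∞) ≤ sup over measurable sets S of finite positive measure of (1/√(μ(S))) |∫_S f dμ| ≤ ‖f‖₂. -/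
/-!
Upper bound: by Cauchy–Schwarz, `|∫_S f| ≤ ‖f‖₂ μ(S)^{1/2}`.

Lower bound: let `M` be the supremum and `L = ‖f‖_∞`. The positive parts `g = f⁺, f⁻`
(written `ENNReal.ofReal ∘ f` and `ENNReal.ofReal ∘ (-f)`) satisfy
`∫_{g > t} g ≤ M μ(g > t)^{1/2}` for every level `t > 0`. The layer cake formula
`∫ g² = ∫_0^∞ ∫_{g > t} g dt` and Cauchy–Schwarz in `t` on `(0, L]` (beyond `L` the level sets
are null) give `∫ g² ≤ M (L ∫_0^L μ(g > t) dt)^{1/2} ≤ M (L ∫ g)^{1/2}`. Summing over both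
parts and using `√a + √b ≤ √(2(a + b))` yields `‖f‖₂² ≤ M (2 ‖f‖₁ L)^{1/2}`.
-/

open MeasureTheory ENNReal Set

theorem ENNReal.ofReal_pow_add_ofReal_neg_pow (a : ℝ) {n : ℕ} (hn : n ≠ 0) :
    ENNReal.ofReal a ^ n + ENNReal.ofReal (-a) ^ n = ‖a‖ₑ ^ n := by
  rcases le_total 0 a with ha | ha
  · simp [ENNReal.ofReal_of_nonpos (neg_nonpos.2 ha), zero_pow hn, Real.enorm_of_nonneg ha]
  · simp [ENNReal.ofReal_of_nonpos ha, zero_pow hn, Real.enorm_eq_ofReal_abs, abs_of_nonpos ha]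

theorem ENNReal.rpow_half_add_rpow_half_le (a b : ℝ≥0∞) :
    a ^ (1 / 2 : ℝ) + b ^ (1 / 2 : ℝ) ≤ (2 * (a + b)) ^ (1 / 2 : ℝ) := by
  have h := ENNReal.rpow_add_le_mul_rpow_add_rpow (a ^ (1 / 2 : ℝ)) (b ^ (1 / 2 : ℝ))
    (one_le_two : (1 : ℝ) ≤ 2)
  simp only [← ENNReal.rpow_mul] at h
  norm_num at h
  calc a ^ (1 / 2 : ℝ) + b ^ (1 / 2 : ℝ)
      = ((a ^ (1 / 2 : ℝ) + b ^ (1 / 2 : ℝ)) ^ (2 : ℝ)) ^ (1 / 2 : ℝ) := by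
        rw [← ENNReal.rpow_mul]; norm_num
    _ ≤ (2 * (a + b)) ^ (1 / 2 : ℝ) := ENNReal.rpow_le_rpow (by exact_mod_cast h) (by norm_num)

theorem ENNReal.ofReal_sqrt_toReal {a : ℝ≥0∞} (ha : a ≠ ⊤) :
    ENNReal.ofReal √a.toReal = a ^ (1 / 2 : ℝ) := by
  rw [Real.sqrt_eq_rpow, ENNReal.toReal_rpow,
    ENNReal.ofReal_toReal (ENNReal.rpow_ne_top_of_nonneg (by norm_num) ha)]

namespace MeasureTheory

theorem lintegral_rpow_half_le {α : Type*} [MeasurableSpace α] (ν : Measure α)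
    {h : α → ℝ≥0∞} (hh : AEMeasurable h ν) :
    ∫⁻ x, h x ^ (1 / 2 : ℝ) ∂ν ≤ (ν univ * ∫⁻ x, h x ∂ν) ^ (1 / 2 : ℝ) := by
  have cs := ENNReal.lintegral_mul_le_Lp_mul_Lq ν Real.HolderConjugate.two_two
    (hh.pow_const (1 / 2 : ℝ)) (aemeasurable_const (b := (1 : ℝ≥0∞)))
  simp only [Pi.mul_apply, mul_one, one_mul, ← ENNReal.rpow_mul, one_rpow, lintegral_const,
    one_div_mul_cancel (two_ne_zero' ℝ), ENNReal.rpow_one] at cs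
  rwa [ENNReal.mul_rpow_of_nonneg _ _ (by norm_num), mul_comm]

variable {Ω : Type*} [MeasurableSpace Ω] {μ : Measure Ω}

theorem lintegral_ofReal_eq_lintegral_meas_lt {g : Ω → ℝ} (hg : Measurable g) :
    ∫⁻ x, ENNReal.ofReal (g x) ∂μ = ∫⁻ t in Ioi 0, μ {x | t < g x} := by
  have h := lintegral_eq_lintegral_meas_lt μ (ae_of_all _ fun x => le_max_right (g x) 0)
    (hg.max measurable_const).aemeasurable
  simp only [ENNReal.ofReal_max, ENNReal.ofReal_zero, max_eq_left zero_le, lt_max_iff] at h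
  rw [h]
  refine setLIntegral_congr_fun measurableSet_Ioi fun t ht => ?_
  simp [not_lt.2 (le_of_lt (mem_Ioi.1 ht))]

/-- Layer cake for `μ.withDensity (ofReal ∘ g)`, whose level sets have measure `∫_{g > t} g`. -/
theorem lintegral_ofReal_sq_eq_lintegral_setLIntegral {g : Ω → ℝ} (hg : Measurable g) :
    ∫⁻ x, ENNReal.ofReal (g x) ^ 2 ∂μ =
      ∫⁻ t in Ioi 0, ∫⁻ x in {x | t < g x}, ENNReal.ofReal (g x) ∂μ := by
  have hdens : Measurable fun x => ENNReal.ofReal (g x) := hg.ennreal_ofReal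
  set ν := μ.withDensity fun x => ENNReal.ofReal (g x)
  calc ∫⁻ x, ENNReal.ofReal (g x) ^ 2 ∂μ = ∫⁻ x, ENNReal.ofReal (g x) ∂ν := by
        rw [lintegral_withDensity_eq_lintegral_mul μ hdens hdens]
        simp [sq]
    _ = ∫⁻ t in Ioi 0, ν {x | t < g x} := lintegral_ofReal_eq_lintegral_meas_lt hg
    _ = _ := setLIntegral_congr_fun measurableSet_Ioi fun t _ =>
        withDensity_apply _ (measurableSet_lt measurable_const hg)

theorem lintegral_ofReal_sq_le_of_setLIntegral_le {g : Ω → ℝ} (hg : Measurable g) {L : ℝ}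
    (hgL : ∀ᵐ x ∂μ, g x ≤ L) {c : ℝ≥0∞}
    (hc : ∀ t : ℝ, 0 < t →
      ∫⁻ x in {x | t < g x}, ENNReal.ofReal (g x) ∂μ ≤ c * μ {x | t < g x} ^ (1 / 2 : ℝ)) :
    ∫⁻ x, ENNReal.ofReal (g x) ^ 2 ∂μ ≤
      c * (ENNReal.ofReal L * ∫⁻ x, ENNReal.ofReal (g x) ∂μ) ^ (1 / 2 : ℝ) := by
  set m : ℝ → ℝ≥0∞ := fun t => μ {x | t < g x}
  have hm : Measurable m :=
    Antitone.measurable fun s t hst => measure_mono fun x hx => lt_of_le_of_lt hst hx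
  have hm_support : (fun t => m t ^ (1 / 2 : ℝ)).support ⊆ Iic L := by
    intro t ht
    by_contra hLt
    have hnull : μ {x | L < g x} = 0 := by simpa using ae_iff.1 hgL
    have hmt : m t = 0 :=
      measure_mono_null (fun x (hx : t < g x) => (not_le.1 hLt).trans hx) hnull
    exact ht (by simp [hmt])
  calc ∫⁻ x, ENNReal.ofReal (g x) ^ 2 ∂μ
      = ∫⁻ t in Ioi 0, ∫⁻ x in {x | t < g x}, ENNReal.ofReal (g x) ∂μ :=
        lintegral_ofReal_sq_eq_lintegral_setLIntegral hg
    _ ≤ ∫⁻ t in Ioi 0, c * m t ^ (1 / 2 : ℝ) := setLIntegral_mono' measurableSet_Ioi hc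
    _ = c * ∫⁻ t in Ioc 0 L, m t ^ (1 / 2 : ℝ) := by
        rw [lintegral_const_mul _ (hm.pow_const _), ← Ioi_inter_Iic, inter_comm,
          ← Measure.restrict_restrict measurableSet_Iic,
          setLIntegral_eq_of_support_subset hm_support]
    _ ≤ c * (ENNReal.ofReal L * ∫⁻ t in Ioc 0 L, m t) ^ (1 / 2 : ℝ) := by
        grw [lintegral_rpow_half_le _ hm.aemeasurable]
        simp [Real.volume_Ioc]
    _ ≤ c * (ENNReal.ofReal L * ∫⁻ x, ENNReal.ofReal (g x) ∂μ) ^ (1 / 2 : ℝ) := by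
        rw [lintegral_ofReal_eq_lintegral_meas_lt hg]
        gcongr
        exact Ioc_subset_Ioi_self

def setIntegralRatios (μ : Measure Ω) (f : Ω → ℝ) : Set ℝ :=
  {r | ∃ S : Set Ω, MeasurableSet S ∧ 0 < μ S ∧ μ S < ⊤ ∧
    r = |∫ x in S, f x ∂μ| / Real.sqrt (μ S).toReal}

theorem sSup_setIntegralRatios_nonneg (f : Ω → ℝ) : 0 ≤ sSup (setIntegralRatios μ f) :=
  Real.sSup_nonneg <| by
    rintro r ⟨S, -, -, -, rfl⟩
    positivity

theorem abs_setIntegral_le_eLpNorm_two_mul_sqrt {f : Ω → ℝ} (hf : MemLp f 2 μ) {S : Set Ω}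
    (hS : μ S < ⊤) :
    |∫ x in S, f x ∂μ| ≤ (eLpNorm f 2 μ).toReal * √(μ S).toReal := by
  have hL1 : eLpNorm f 1 (μ.restrict S) ≤ eLpNorm f 2 μ * μ S ^ (1 / 2 : ℝ) := by
    calc eLpNorm f 1 (μ.restrict S) ≤ eLpNorm f 2 (μ.restrict S) * μ S ^ (1 / 2 : ℝ) := by
          have h := eLpNorm_le_eLpNorm_mul_rpow_measure_univ (by norm_num : (1 : ℝ≥0∞) ≤ 2)
            (hf.1.restrict (s := S))
          norm_num at h
          exact h
      _ ≤ eLpNorm f 2 μ * μ S ^ (1 / 2 : ℝ) := by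
          gcongr
          exact Measure.restrict_le_self
  calc |∫ x in S, f x ∂μ| ≤ ∫ x in S, ‖f x‖ ∂μ := abs_integral_le_integral_abs
    _ = (eLpNorm f 1 (μ.restrict S)).toReal := by
        rw [eLpNorm_one_eq_lintegral_enorm, integral_norm_eq_lintegral_enorm hf.1.restrict]
    _ ≤ (eLpNorm f 2 μ * μ S ^ (1 / 2 : ℝ)).toReal :=
        ENNReal.toReal_mono (ENNReal.mul_ne_top hf.2.ne
          (ENNReal.rpow_ne_top_of_nonneg (by norm_num) hS.ne)) hL1
    _ = (eLpNorm f 2 μ).toReal * √(μ S).toReal := by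
        rw [ENNReal.toReal_mul, ← ENNReal.toReal_rpow, Real.sqrt_eq_rpow]

theorem eLpNorm_two_mem_upperBounds_setIntegralRatios {f : Ω → ℝ} (hf : MemLp f 2 μ) :
    (eLpNorm f 2 μ).toReal ∈ upperBounds (setIntegralRatios μ f) := by
  rintro r ⟨S, -, hS0, hS, rfl⟩
  rw [div_le_iff₀ (Real.sqrt_pos.2 (ENNReal.toReal_pos hS0.ne' hS.ne))]
  exact abs_setIntegral_le_eLpNorm_two_mul_sqrt hf hS

theorem abs_setIntegral_le_sSup_setIntegralRatios_mul_sqrt {f : Ω → ℝ}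
    (hbdd : BddAbove (setIntegralRatios μ f)) {S : Set Ω} (hSm : MeasurableSet S)
    (hS : μ S < ⊤) :
    |∫ x in S, f x ∂μ| ≤ sSup (setIntegralRatios μ f) * √(μ S).toReal := by
  rcases eq_or_ne (μ S) 0 with hS0 | hS0
  · rw [Measure.restrict_eq_zero.2 hS0, integral_zero_measure, abs_zero]
    exact mul_nonneg (sSup_setIntegralRatios_nonneg f) (Real.sqrt_nonneg _)
  · rw [← div_le_iff₀ (Real.sqrt_pos.2 (ENNReal.toReal_pos hS0 hS.ne))]
    exact le_csSup hbdd ⟨S, hSm, pos_iff_ne_zero.2 hS0, hS, rfl⟩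

theorem setLIntegral_ofReal_le_of_abs_setIntegral_le {f : Ω → ℝ} (hfm : Measurable f)
    (hf : Integrable f μ) {M : ℝ}
    (hM : ∀ S, MeasurableSet S → μ S < ⊤ → |∫ x in S, f x ∂μ| ≤ M * √(μ S).toReal)
    {t : ℝ} (ht : 0 < t) :
    ∫⁻ x in {x | t < f x}, ENNReal.ofReal (f x) ∂μ ≤
      ENNReal.ofReal M * μ {x | t < f x} ^ (1 / 2 : ℝ) := by
  have hSm : MeasurableSet {x | t < f x} := measurableSet_lt measurable_const hfm
  have hS : μ {x | t < f x} < ⊤ := hf.measure_gt_lt_top ht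
  calc ∫⁻ x in {x | t < f x}, ENNReal.ofReal (f x) ∂μ
      = ENNReal.ofReal (∫ x in {x | t < f x}, f x ∂μ) :=
        (ofReal_integral_eq_lintegral_ofReal hf.restrict
          (ae_restrict_of_forall_mem hSm fun x hx => (ht.trans hx).le)).symm
    _ ≤ ENNReal.ofReal (M * √(μ {x | t < f x}).toReal) :=
        ENNReal.ofReal_le_ofReal ((le_abs_self _).trans (hM _ hSm hS))
    _ = ENNReal.ofReal M * μ {x | t < f x} ^ (1 / 2 : ℝ) := by
        rw [ENNReal.ofReal_mul' (Real.sqrt_nonneg _), ENNReal.ofReal_sqrt_toReal hS.ne]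

theorem eLpNorm_two_sq_le_of_abs_setIntegral_le {f : Ω → ℝ} (hfm : Measurable f)
    (hf : Integrable f μ) {L : ℝ} (hfL : ∀ᵐ x ∂μ, |f x| ≤ L) {M : ℝ}
    (hM : ∀ S, MeasurableSet S → μ S < ⊤ → |∫ x in S, f x ∂μ| ≤ M * √(μ S).toReal) :
    eLpNorm f 2 μ ^ 2 ≤
      ENNReal.ofReal M * (2 * eLpNorm f 1 μ * ENNReal.ofReal L) ^ (1 / 2 : ℝ) := by
  have hM_neg : ∀ S, MeasurableSet S → μ S < ⊤ →
      |∫ x in S, -f x ∂μ| ≤ M * √(μ S).toReal := by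
    simpa only [integral_neg, abs_neg] using hM
  have hpos := lintegral_ofReal_sq_le_of_setLIntegral_le hfm
    (hfL.mono fun x hx => (le_abs_self _).trans hx)
    fun t ht => setLIntegral_ofReal_le_of_abs_setIntegral_le hfm hf hM ht
  have hneg := lintegral_ofReal_sq_le_of_setLIntegral_le hfm.neg
    (hfL.mono fun x hx => (neg_le_abs _).trans hx)
    fun t ht => setLIntegral_ofReal_le_of_abs_setIntegral_le hfm.neg hf.neg hM_neg ht
  have h1 : eLpNorm f 1 μ =
      ∫⁻ x, ENNReal.ofReal (f x) ∂μ + ∫⁻ x, ENNReal.ofReal (-f x) ∂μ := by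
    rw [eLpNorm_one_eq_lintegral_enorm, ← lintegral_add_left hfm.ennreal_ofReal]
    simpa using lintegral_congr fun x =>
      (ENNReal.ofReal_pow_add_ofReal_neg_pow (f x) one_ne_zero).symm
  have h2 : eLpNorm f 2 μ ^ 2 =
      ∫⁻ x, ENNReal.ofReal (f x) ^ 2 ∂μ + ∫⁻ x, ENNReal.ofReal (-f x) ^ 2 ∂μ := by
    have h := eLpNorm_nnreal_pow_eq_lintegral (μ := μ) (f := f) (p := 2) two_ne_zero
    simp only [NNReal.coe_ofNat, ENNReal.coe_ofNat, ENNReal.rpow_two] at h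
    rw [h, ← lintegral_add_left (hfm.ennreal_ofReal.pow_const 2)]
    exact lintegral_congr fun x =>
      (ENNReal.ofReal_pow_add_ofReal_neg_pow (f x) two_ne_zero).symm
  calc eLpNorm f 2 μ ^ 2
      = ∫⁻ x, ENNReal.ofReal (f x) ^ 2 ∂μ + ∫⁻ x, ENNReal.ofReal (-f x) ^ 2 ∂μ := h2
    _ ≤ ENNReal.ofReal M * (ENNReal.ofReal L * ∫⁻ x, ENNReal.ofReal (f x) ∂μ) ^ (1 / 2 : ℝ)
        + ENNReal.ofReal M * (ENNReal.ofReal L * ∫⁻ x, ENNReal.ofReal (-f x) ∂μ) ^ (1 / 2 : ℝ) :=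
        add_le_add hpos hneg
    _ ≤ ENNReal.ofReal M * (2 * (ENNReal.ofReal L * ∫⁻ x, ENNReal.ofReal (f x) ∂μ
        + ENNReal.ofReal L * ∫⁻ x, ENNReal.ofReal (-f x) ∂μ)) ^ (1 / 2 : ℝ) := by
        rw [← mul_add]
        gcongr
        exact ENNReal.rpow_half_add_rpow_half_le _ _
    _ = ENNReal.ofReal M * (2 * eLpNorm f 1 μ * ENNReal.ofReal L) ^ (1 / 2 : ℝ) := by
        rw [h1]
        congr 2
        ring

end MeasureTheory

open MeasureTheory

/-- For a bounded, measurable (not necessarily nonnegative) function `f` in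
`L¹ ∩ L²` on a measure space `(Ω, ℱ, μ)`, one has
`‖f‖₂² / √(2 ‖f‖₁ ‖f‖_∞) ≤ sup_{S : 0 < μ S < ∞} |∫_S f dμ| / √(μ S) ≤ ‖f‖₂`. -/
theorem stmt1 {Ω : Type*} [MeasurableSpace Ω] (μ : Measure Ω) (f : Ω → ℝ)
    (hf : Measurable f)
    (hf_bdd : MemLp f ⊤ μ) (hf1 : MemLp f 1 μ) (hf2 : MemLp f 2 μ) :
    (eLpNorm f 2 μ).toReal ^ 2 /
        Real.sqrt (2 * (eLpNorm f 1 μ).toReal * (eLpNorm f ⊤ μ).toReal) ≤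
      sSup {r : ℝ | ∃ S : Set Ω, MeasurableSet S ∧ 0 < μ S ∧ μ S < ⊤ ∧
        r = |∫ x in S, f x ∂μ| / Real.sqrt (μ S).toReal} ∧
    sSup {r : ℝ | ∃ S : Set Ω, MeasurableSet S ∧ 0 < μ S ∧ μ S < ⊤ ∧
        r = |∫ x in S, f x ∂μ| / Real.sqrt (μ S).toReal} ≤ (eLpNorm f 2 μ).toReal := by
  have hub := eLpNorm_two_mem_upperBounds_setIntegralRatios hf2
  have hM0 := sSup_setIntegralRatios_nonneg (μ := μ) f
  refine ⟨?_, Real.sSup_le hub ENNReal.toReal_nonneg⟩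
  have hfL : ∀ᵐ x ∂μ, |f x| ≤ (eLpNorm f ⊤ μ).toReal := by
    simpa only [Real.norm_eq_abs, ← toReal_eLpNorm hf.aestronglyMeasurable]
      using ae_le_lpNorm_exponent_top hf_bdd
  have key := eLpNorm_two_sq_le_of_abs_setIntegral_le hf (memLp_one_iff_integrable.1 hf1) hfL
    fun S hS hSfin => abs_setIntegral_le_sSup_setIntegralRatios_mul_sqrt ⟨_, hub⟩ hS hSfin
  rw [ENNReal.ofReal_toReal hf_bdd.2.ne] at key
  refine div_le_of_le_mul₀ (Real.sqrt_nonneg _) hM0 ?_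
  have h := ENNReal.toReal_mono (by finiteness) key
  rw [Real.sqrt_eq_rpow]
  simp only [ENNReal.toReal_pow, ENNReal.toReal_mul, ENNReal.toReal_ofReal hM0,
    ← ENNReal.toReal_rpow, ENNReal.toReal_ofNat] at h
  exact h
end

section
/- Let U : Ω × Ω → ℝ be a symmetric measurable square-integrable function on a σ-finite measure space. Then ‖U‖_{2→2}⁴ ≤ t(C₄, U) ≤ ‖U‖_{2→2}² ‖U‖₂², where t(C₄,U) = ∫∫∫∫ U(x,y)U(y,z)U(z,w)U(w,x) dμ(x)dμ(y)dμ(z)dμ(w). -/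
/-!
Let `T` be the integral operator with kernel `U` and `W(y, z) = ∫ U(a, y) U(a, z) dμ(a)` the
kernel of `T*T`. Since `U` is symmetric, `W(x, ·) = T U(x, ·)`, and Fubini gives
`t(C₄, U) = ‖W‖₂²`.

For unit vectors `f, g`, Cauchy–Schwarz gives `⟨f, Tg⟩² ≤ ‖Tg‖² = ⟨g, Wg⟩ ≤ ‖W‖₂`, hence
`‖U‖_{2→2}⁴ ≤ ‖W‖₂² = t(C₄, U)`. Conversely,
`t(C₄, U) = ∫ ‖T U(x, ·)‖² dμ(x) ≤ ‖U‖_{2→2}² ∫ ‖U(x, ·)‖² dμ(x) = ‖U‖_{2→2}² ‖U‖₂²`.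
-/
open MeasureTheory ENNReal

/-- The kernel norm `‖U‖_{2→2}`: the operator norm of the integral operator with kernel `U`
on `L²(Ω, μ)`, expressed as the supremum of `∫∫ f(x) U(x,y) g(y) dμ dμ` over `f, g` of
`L²`-norm one. -/
noncomputable def kernelNorm {Ω : Type*} [MeasurableSpace Ω] (μ : Measure Ω)
    (U : Ω → Ω → ℝ) : ℝ :=
  sSup {r : ℝ | ∃ f g : Ω → ℝ, Measurable f ∧ Measurable g ∧
    eLpNorm f 2 μ = 1 ∧ eLpNorm g 2 μ = 1 ∧
    r = ∫ x, ∫ y, f x * U x y * g y ∂μ ∂μ}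

open Function

section RealL2

variable {α : Type*} [MeasurableSpace α] {μ : Measure α} {p q : α → ℝ}

theorem MeasureTheory.MemLp.toReal_eLpNorm_two_sq (hp : MemLp p 2 μ) :
    (eLpNorm p 2 μ).toReal ^ 2 = ∫ a, p a ^ 2 ∂μ := by
  rw [← Lp.norm_toLp p hp, ← real_inner_self_eq_norm_sq, L2.inner_def]
  refine integral_congr_ae ?_
  filter_upwards [hp.coeFn_toLp] with a ha
  simp [ha, sq]

theorem abs_integral_mul_le_of_memLp_two (hp : MemLp p 2 μ) (hq : MemLp q 2 μ) :
    |∫ a, p a * q a ∂μ| ≤ (eLpNorm p 2 μ).toReal * (eLpNorm q 2 μ).toReal := by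
  have h := abs_real_inner_le_norm (hp.toLp p) (hq.toLp q)
  rw [L2.inner_def, Lp.norm_toLp p hp, Lp.norm_toLp q hq] at h
  refine le_of_eq_of_le (congrArg _ (integral_congr_ae ?_)) h
  filter_upwards [hp.coeFn_toLp, hq.coeFn_toLp] with a ha hb
  simp [ha, hb, mul_comm]

theorem eLpNorm_inv_toReal_smul_self {r : ℝ≥0∞} (hp : MemLp p r μ) (h0 : eLpNorm p r μ ≠ 0) :
    eLpNorm ((eLpNorm p r μ).toReal⁻¹ • p) r μ = 1 := by
  rw [eLpNorm_const_smul, Real.enorm_eq_ofReal (by positivity),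
    ENNReal.ofReal_inv_of_pos (ENNReal.toReal_pos h0 hp.eLpNorm_ne_top),
    ENNReal.ofReal_toReal hp.eLpNorm_ne_top, ENNReal.inv_mul_cancel h0 hp.eLpNorm_ne_top]

theorem sq_integral_mul_le_of_memLp_two (hp : MemLp p 2 μ) (hq : MemLp q 2 μ) :
    (∫ a, p a * q a ∂μ) ^ 2 ≤ (∫ a, p a ^ 2 ∂μ) * ∫ a, q a ^ 2 ∂μ := by
  rw [← hp.toReal_eLpNorm_two_sq, ← hq.toReal_eLpNorm_two_sq, ← mul_pow, ← sq_abs]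
  exact pow_le_pow_left₀ (abs_nonneg _) (abs_integral_mul_le_of_memLp_two hp hq) 2

end RealL2

section Product

variable {α β : Type*} [MeasurableSpace α] [MeasurableSpace β] {μ : Measure α} {ν : Measure β}
  {f : α → ℝ} {g : β → ℝ} {V : α → β → ℝ}

theorem memLp_two_prod_mul (hf : MemLp f 2 μ) (hg : MemLp g 2 ν) :
    MemLp (fun z : α × β => f z.1 * g z.2) 2 (μ.prod ν) := by
  refine (memLp_two_iff_integrable_sq (hf.1.comp_fst.mul hg.1.comp_snd)).2 ?_
  exact (hf.integrable_sq.mul_prod hg.integrable_sq).congr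
    (.of_forall fun z => by simp only [Pi.mul_apply]; ring)

theorem integrable_bilinear (hV : MemLp (uncurry V) 2 (μ.prod ν)) (hf : MemLp f 2 μ)
    (hg : MemLp g 2 ν) :
    Integrable (fun z : α × β => f z.1 * V z.1 z.2 * g z.2) (μ.prod ν) :=
  ((memLp_two_prod_mul hf hg).integrable_mul hV).congr
    (.of_forall fun z => by simp only [Pi.mul_apply, uncurry]; ring)

variable [SFinite μ] [SFinite ν]

theorem toReal_eLpNorm_prod_mul (hf : MemLp f 2 μ) (hg : MemLp g 2 ν) :
    (eLpNorm (fun z : α × β => f z.1 * g z.2) 2 (μ.prod ν)).toReal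
      = (eLpNorm f 2 μ).toReal * (eLpNorm g 2 ν).toReal := by
  refine (pow_left_inj₀ ENNReal.toReal_nonneg (by positivity) two_ne_zero).1 ?_
  rw [(memLp_two_prod_mul hf hg).toReal_eLpNorm_two_sq, mul_pow, hf.toReal_eLpNorm_two_sq,
    hg.toReal_eLpNorm_two_sq, ← integral_prod_mul]
  simp_rw [mul_pow]

theorem integral_integral_bilinear_swap (hV : MemLp (uncurry V) 2 (μ.prod ν))
    (hf : MemLp f 2 μ) (hg : MemLp g 2 ν) :
    ∫ x, ∫ y, f x * V x y * g y ∂ν ∂μ = ∫ y, ∫ x, f x * V x y * g y ∂μ ∂ν :=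
  integral_integral_swap (integrable_bilinear hV hf hg)

theorem integral_bilinear_le (hV : MemLp (uncurry V) 2 (μ.prod ν)) (hf : MemLp f 2 μ)
    (hg : MemLp g 2 ν) :
    ∫ x, ∫ y, f x * V x y * g y ∂ν ∂μ
      ≤ (eLpNorm f 2 μ).toReal * (eLpNorm g 2 ν).toReal
        * (eLpNorm (uncurry V) 2 (μ.prod ν)).toReal := by
  rw [integral_integral (integrable_bilinear hV hf hg), ← toReal_eLpNorm_prod_mul hf hg]
  refine le_of_eq_of_le ?_
    ((le_abs_self _).trans (abs_integral_mul_le_of_memLp_two (memLp_two_prod_mul hf hg) hV))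
  exact integral_congr_ae (.of_forall fun z => by simp only [uncurry]; ring)

theorem integral_integral_sq_eq (hV : MemLp (uncurry V) 2 (μ.prod ν)) :
    ∫ x, ∫ y, V x y ^ 2 ∂ν ∂μ = (eLpNorm (uncurry V) 2 (μ.prod ν)).toReal ^ 2 := by
  rw [hV.toReal_eLpNorm_two_sq]
  exact integral_integral hV.integrable_sq

theorem ae_memLp_two_row (hV : MemLp (uncurry V) 2 (μ.prod ν)) :
    ∀ᵐ x ∂μ, MemLp (V x) 2 ν := by
  filter_upwards [hV.1.prodMk_left, hV.integrable_sq.prod_right_ae] with x hxm hx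
  exact (memLp_two_iff_integrable_sq hxm).2 hx

theorem ae_memLp_two_column (hV : MemLp (uncurry V) 2 (μ.prod ν)) :
    ∀ᵐ y ∂ν, MemLp (fun x => V x y) 2 μ := by
  filter_upwards [hV.1.prodMk_right, hV.integrable_sq.prod_left_ae] with y hym hy
  exact (memLp_two_iff_integrable_sq hym).2 hy

end Product

noncomputable def integralOperator {α β : Type*} [MeasurableSpace β] (ν : Measure β)
    (V : α → β → ℝ) (g : β → ℝ) : α → ℝ :=
  fun x => ∫ y, V x y * g y ∂ν

noncomputable def gramKernel {α β : Type*} [MeasurableSpace α] (μ : Measure α)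
    (V : α → β → ℝ) : β → β → ℝ :=
  fun y z => ∫ x, V x y * V x z ∂μ

theorem gramKernel_comm {α β : Type*} [MeasurableSpace α] {μ : Measure α} {V : α → β → ℝ}
    (y z : β) : gramKernel μ V y z = gramKernel μ V z y :=
  integral_congr_ae (.of_forall fun _ => mul_comm _ _)

theorem gramKernel_eq_integralOperator {Ω : Type*} [MeasurableSpace Ω] {μ : Measure Ω}
    {U : Ω → Ω → ℝ} (hsymm : ∀ x y, U x y = U y x) (x z : Ω) :
    gramKernel μ U x z = integralOperator μ U (U x) z :=
  integral_congr_ae (.of_forall fun a => by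
    simp only [hsymm a x, hsymm a z, mul_comm])

section IntegralOperator

variable {α β : Type*} [MeasurableSpace α] [MeasurableSpace β] {μ : Measure α} {ν : Measure β}
  {g : β → ℝ} {V : α → β → ℝ}

theorem integral_mul_integralOperator (f : α → ℝ) :
    ∫ x, f x * integralOperator ν V g x ∂μ = ∫ x, ∫ y, f x * V x y * g y ∂ν ∂μ := by
  simp_rw [integralOperator, ← integral_const_mul, mul_assoc]

variable [SFinite μ] [SFinite ν]

theorem measurable_integralOperator (hVm : Measurable (uncurry V)) (hgm : Measurable g) :
    Measurable (integralOperator ν V g) :=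
  (hVm.mul (hgm.comp measurable_snd)).stronglyMeasurable.integral_prod_right'.measurable

theorem memLp_two_integralOperator (hV : MemLp (uncurry V) 2 (μ.prod ν)) (hg : MemLp g 2 ν) :
    MemLp (integralOperator ν V g) 2 μ := by
  have hTm : AEStronglyMeasurable (integralOperator ν V g) μ :=
    (hV.1.mul hg.1.comp_snd).integral_prod_right'
  refine (memLp_two_iff_integrable_sq hTm).2 <|
    (hV.integrable_sq.integral_prod_left.mul_const (∫ y, g y ^ 2 ∂ν)).mono' (hTm.pow 2) ?_
  filter_upwards [ae_memLp_two_row hV] with x hx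
  rw [Real.norm_of_nonneg (sq_nonneg _)]
  exact sq_integral_mul_le_of_memLp_two hx hg

theorem measurable_gramKernel (hVm : Measurable (uncurry V)) :
    Measurable (uncurry (gramKernel μ V)) :=
  ((hVm.comp (measurable_snd.prodMk measurable_fst.fst)).mul
    (hVm.comp (measurable_snd.prodMk measurable_fst.snd))).stronglyMeasurable
    |>.integral_prod_right'.measurable

theorem memLp_two_gramKernel (hVm : Measurable (uncurry V))
    (hV : MemLp (uncurry V) 2 (μ.prod ν)) :
    MemLp (uncurry (gramKernel μ V)) 2 (ν.prod ν) := by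
  have hWm : AEStronglyMeasurable (uncurry (gramKernel μ V)) (ν.prod ν) :=
    (measurable_gramKernel hVm).aestronglyMeasurable
  have hcol := hV.integrable_sq.integral_prod_right
  refine (memLp_two_iff_integrable_sq hWm).2 <| (hcol.mul_prod hcol).mono' (hWm.pow 2) ?_
  filter_upwards [Measure.quasiMeasurePreserving_fst.ae (ae_memLp_two_column hV),
    Measure.quasiMeasurePreserving_snd.ae (ae_memLp_two_column hV)] with z hz₁ hz₂
  rw [Real.norm_of_nonneg (sq_nonneg _)]
  exact sq_integral_mul_le_of_memLp_two hz₁ hz₂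

theorem integral_column_mul_integralOperator (hV : MemLp (uncurry V) 2 (μ.prod ν))
    (hg : MemLp g 2 ν) {y : β} (hy : MemLp (fun x => V x y) 2 μ) :
    ∫ x, V x y * integralOperator ν V g x ∂μ = ∫ z, gramKernel μ V y z * g z ∂ν := by
  rw [integral_mul_integralOperator, integral_integral_bilinear_swap hV hy hg]
  simp_rw [gramKernel, ← integral_mul_const]

theorem integral_sq_integralOperator (hV : MemLp (uncurry V) 2 (μ.prod ν)) (hg : MemLp g 2 ν) :
    ∫ x, integralOperator ν V g x ^ 2 ∂μ = ∫ y, ∫ z, g y * gramKernel μ V y z * g z ∂ν ∂ν := by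
  simp_rw [sq, integral_mul_integralOperator]
  rw [integral_integral_bilinear_swap hV (memLp_two_integralOperator hV hg) hg]
  refine integral_congr_ae ?_
  filter_upwards [ae_memLp_two_column hV] with y hy
  calc ∫ x, integralOperator ν V g x * V x y * g y ∂μ
      = (∫ x, V x y * integralOperator ν V g x ∂μ) * g y := by
        rw [← integral_mul_const]
        simp_rw [mul_comm (integralOperator ν V g _)]
    _ = ∫ z, g y * gramKernel μ V y z * g z ∂ν := by
        rw [integral_column_mul_integralOperator hV hg hy, ← integral_mul_const]
        simp_rw [mul_comm _ (g y), mul_assoc]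

end IntegralOperator

section KernelNorm

variable {Ω : Type*} [MeasurableSpace Ω] {μ : Measure Ω} [SFinite μ] {f g : Ω → ℝ}
  {U : Ω → Ω → ℝ}

theorem le_kernelNorm (hU : MemLp (uncurry U) 2 (μ.prod μ)) (hfm : Measurable f)
    (hgm : Measurable g) (hf : eLpNorm f 2 μ = 1) (hg : eLpNorm g 2 μ = 1) :
    ∫ x, ∫ y, f x * U x y * g y ∂μ ∂μ ≤ kernelNorm μ U := by
  refine le_csSup ⟨(eLpNorm (uncurry U) 2 (μ.prod μ)).toReal, ?_⟩
    ⟨f, g, hfm, hgm, hf, hg, rfl⟩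
  rintro _ ⟨f, g, hfm, hgm, hf, hg, rfl⟩
  simpa [hf, hg] using integral_bilinear_le hU ⟨hfm.aestronglyMeasurable, by simp [hf]⟩
    ⟨hgm.aestronglyMeasurable, by simp [hg]⟩

theorem kernelNorm_nonneg (hU : MemLp (uncurry U) 2 (μ.prod μ)) : 0 ≤ kernelNorm μ U := by
  rcases Set.eq_empty_or_nonempty {r : ℝ | ∃ f g : Ω → ℝ, Measurable f ∧ Measurable g ∧
    eLpNorm f 2 μ = 1 ∧ eLpNorm g 2 μ = 1 ∧ r = ∫ x, ∫ y, f x * U x y * g y ∂μ ∂μ} with h | h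
  · rw [kernelNorm, h, Real.sSup_empty]
  · obtain ⟨_, f, g, hfm, hgm, hf, hg, rfl⟩ := h
    have h₁ := le_kernelNorm hU hfm hgm hf hg
    have h₂ := le_kernelNorm hU hfm.neg hgm (by rwa [eLpNorm_neg]) hg
    simp only [Pi.neg_apply, neg_mul, integral_neg] at h₂
    linarith

theorem integral_bilinear_le_kernelNorm (hU : MemLp (uncurry U) 2 (μ.prod μ))
    (hfm : Measurable f) (hgm : Measurable g) (hf : MemLp f 2 μ) (hg : MemLp g 2 μ) :
    ∫ x, ∫ y, f x * U x y * g y ∂μ ∂μ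
      ≤ kernelNorm μ U * (eLpNorm f 2 μ).toReal * (eLpNorm g 2 μ).toReal := by
  by_cases h0 : eLpNorm f 2 μ = 0 ∨ eLpNorm g 2 μ = 0
  · have h := integral_bilinear_le hU hf hg
    rcases h0 with h0 | h0 <;> simpa [h0] using h
  push Not at h0
  set A := (eLpNorm f 2 μ).toReal
  set B := (eLpNorm g 2 μ).toReal
  have hA : 0 < A := ENNReal.toReal_pos h0.1 hf.eLpNorm_ne_top
  have hB : 0 < B := ENNReal.toReal_pos h0.2 hg.eLpNorm_ne_top
  have h := le_kernelNorm hU (hfm.const_smul A⁻¹) (hgm.const_smul B⁻¹)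
    (eLpNorm_inv_toReal_smul_self hf h0.1) (eLpNorm_inv_toReal_smul_self hg h0.2)
  simp_rw [Pi.smul_apply, smul_eq_mul, show ∀ x y, A⁻¹ * f x * U x y * (B⁻¹ * g y)
    = A⁻¹ * B⁻¹ * (f x * U x y * g y) from fun _ _ => by ring, integral_const_mul] at h
  rw [mul_assoc, mul_comm (kernelNorm μ U), ← inv_mul_le_iff₀ (mul_pos hA hB), mul_inv]
  exact h

theorem integral_sq_integralOperator_le (hUm : Measurable (uncurry U))
    (hU : MemLp (uncurry U) 2 (μ.prod μ)) (hgm : Measurable g) (hg : MemLp g 2 μ) :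
    ∫ x, integralOperator μ U g x ^ 2 ∂μ ≤ kernelNorm μ U ^ 2 * ∫ y, g y ^ 2 ∂μ := by
  have hT := memLp_two_integralOperator hU hg
  set C := (eLpNorm (integralOperator μ U g) 2 μ).toReal
  set G := (eLpNorm g 2 μ).toReal
  have key : C ^ 2 ≤ kernelNorm μ U * C * G := by
    rw [hT.toReal_eLpNorm_two_sq]
    simp_rw [sq, integral_mul_integralOperator]
    exact integral_bilinear_le_kernelNorm hU (measurable_integralOperator hUm hgm) hgm hT hg
  rw [← hT.toReal_eLpNorm_two_sq, ← hg.toReal_eLpNorm_two_sq]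
  nlinarith [kernelNorm_nonneg hU, sq_nonneg (kernelNorm μ U * G - C),
    (ENNReal.toReal_nonneg : 0 ≤ C), (ENNReal.toReal_nonneg : 0 ≤ G)]

theorem kernelNorm_sq_le_eLpNorm_gramKernel (hUm : Measurable (uncurry U))
    (hU : MemLp (uncurry U) 2 (μ.prod μ)) :
    kernelNorm μ U ^ 2 ≤ (eLpNorm (uncurry (gramKernel μ U)) 2 (μ.prod μ)).toReal := by
  set D := (eLpNorm (uncurry (gramKernel μ U)) 2 (μ.prod μ)).toReal
  suffices h : kernelNorm μ U ≤ √D from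
    (pow_le_pow_left₀ (kernelNorm_nonneg hU) h 2).trans_eq (Real.sq_sqrt ENNReal.toReal_nonneg)
  refine Real.sSup_le ?_ (Real.sqrt_nonneg D)
  rintro _ ⟨f, g, hfm, hgm, hf1, hg1, rfl⟩
  have hf : MemLp f 2 μ := ⟨hfm.aestronglyMeasurable, by simp [hf1]⟩
  have hg : MemLp g 2 μ := ⟨hgm.aestronglyMeasurable, by simp [hg1]⟩
  have hT := memLp_two_integralOperator hU hg
  have hTW : ∫ x, integralOperator μ U g x ^ 2 ∂μ ≤ D := by
    rw [integral_sq_integralOperator hU hg]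
    simpa [hg1] using integral_bilinear_le (memLp_two_gramKernel hUm hU) hg hg
  calc ∫ x, ∫ y, f x * U x y * g y ∂μ ∂μ
      = ∫ x, f x * integralOperator μ U g x ∂μ := (integral_mul_integralOperator f).symm
    _ ≤ (eLpNorm (integralOperator μ U g) 2 μ).toReal := by
        simpa [hf1] using (le_abs_self _).trans (abs_integral_mul_le_of_memLp_two hf hT)
    _ = √(∫ x, integralOperator μ U g x ^ 2 ∂μ) := by
        rw [← hT.toReal_eLpNorm_two_sq, Real.sqrt_sq ENNReal.toReal_nonneg]
    _ ≤ √D := Real.sqrt_le_sqrt hTW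

theorem integral_cycle_four_eq (hsymm : ∀ x y, U x y = U y x)
    (hU : MemLp (uncurry U) 2 (μ.prod μ)) :
    ∫ x, ∫ y, ∫ z, ∫ w, U x y * U y z * U z w * U w x ∂μ ∂μ ∂μ ∂μ
      = ∫ x, ∫ z, gramKernel μ U x z ^ 2 ∂μ ∂μ := by
  refine integral_congr_ae ?_
  filter_upwards [ae_memLp_two_row hU] with x hx
  have hW : MemLp (fun z => gramKernel μ U z x) 2 μ := by
    simpa only [gramKernel_comm _ x, gramKernel_eq_integralOperator hsymm x]
      using memLp_two_integralOperator hU hx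
  calc ∫ y, ∫ z, ∫ w, U x y * U y z * U z w * U w x ∂μ ∂μ ∂μ
      = ∫ y, ∫ z, U x y * U y z * gramKernel μ U z x ∂μ ∂μ := by
        refine integral_congr_ae (.of_forall fun y => integral_congr_ae (.of_forall fun z => ?_))
        dsimp only [gramKernel]
        rw [← integral_const_mul]
        refine integral_congr_ae (.of_forall fun w => ?_)
        simp only [hsymm z w]
        ring
    _ = ∫ z, ∫ y, U x y * U y z * gramKernel μ U z x ∂μ ∂μ :=
        integral_integral_bilinear_swap hU hx hW
    _ = ∫ z, gramKernel μ U x z ^ 2 ∂μ := by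
        refine integral_congr_ae (.of_forall fun z => ?_)
        dsimp only
        rw [integral_mul_const, gramKernel_comm z x, sq]
        congr 1
        exact integral_congr_ae (.of_forall fun y => by simp only [hsymm x y])

theorem integral_integral_sq_gramKernel_le (hUm : Measurable (uncurry U))
    (hsymm : ∀ x y, U x y = U y x) (hU : MemLp (uncurry U) 2 (μ.prod μ)) :
    ∫ x, ∫ z, gramKernel μ U x z ^ 2 ∂μ ∂μ
      ≤ kernelNorm μ U ^ 2 * (eLpNorm (uncurry U) 2 (μ.prod μ)).toReal ^ 2 := by
  rw [← integral_integral_sq_eq hU, ← integral_const_mul]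
  refine integral_mono_of_nonneg (.of_forall fun x => integral_nonneg fun z => sq_nonneg _)
    (hU.integrable_sq.integral_prod_left.const_mul _) ?_
  filter_upwards [ae_memLp_two_row hU] with x hx
  simp_rw [gramKernel_eq_integralOperator hsymm]
  exact integral_sq_integralOperator_le hUm hU (hUm.comp measurable_prodMk_left) hx

end KernelNorm

/-- For a symmetric measurable square-integrable kernel `U` on a σ-finite
measure space, `‖U‖_{2→2}⁴ ≤ t(C₄, U) ≤ ‖U‖_{2→2}² ‖U‖₂²`, where
`t(C₄,U) = ∫∫∫∫ U(x,y) U(y,z) U(z,w) U(w,x) dμ⁴`. -/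
theorem stmt2 {Ω : Type*} [MeasurableSpace Ω] (μ : Measure Ω) [SigmaFinite μ]
    (U : Ω → Ω → ℝ) (hmeas : Measurable (Function.uncurry U))
    (hsymm : ∀ x y, U x y = U y x)
    (hU2 : MemLp (Function.uncurry U) 2 (μ.prod μ)) :
    kernelNorm μ U ^ 4 ≤
      (∫ x, ∫ y, ∫ z, ∫ w, U x y * U y z * U z w * U w x ∂μ ∂μ ∂μ ∂μ) ∧
    (∫ x, ∫ y, ∫ z, ∫ w, U x y * U y z * U z w * U w x ∂μ ∂μ ∂μ ∂μ) ≤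
      kernelNorm μ U ^ 2 * (eLpNorm (Function.uncurry U) 2 (μ.prod μ)).toReal ^ 2 := by
  rw [integral_cycle_four_eq hsymm hU2]
  refine ⟨?_, integral_integral_sq_gramKernel_le hmeas hsymm hU2⟩
  rw [integral_integral_sq_eq (memLp_two_gramKernel hmeas hU2), show 4 = 2 * 2 from rfl, pow_mul]
  exact pow_le_pow_left₀ (sq_nonneg _) (kernelNorm_sq_le_eLpNorm_gramKernel hmeas hU2) 2
end

section
/- Let Ω and Ω' be σ-finite measure spaces and φ : Ω' → Ω a measure-preserving map. If U : Ω × Ω → ℝ is integrable, then ‖U‖_□ = ‖U^φ‖_□, where ‖U‖_□ = sup over pairs of measurable sets S, T of |∫_{S×T} U dμ×dμ|. -/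
open MeasureTheory ENNReal

/-- The cut norm of an integrable kernel `U` on `Ω × Ω`:
`‖U‖_□ = sup_{S, T measurable} |∫_{S×T} U dμ dμ|`. -/
noncomputable def cutNorm {Ω : Type*} [MeasurableSpace Ω] (μ : Measure Ω)
    (U : Ω → Ω → ℝ) : ℝ :=
  sSup {r : ℝ | ∃ S T : Set Ω, MeasurableSet S ∧ MeasurableSet T ∧
    r = |∫ x in S, ∫ y in T, U x y ∂μ ∂μ|}

/-! Preimages of measurable sets under `φ` are measurable and `φ` transports the integrals, so
`‖U‖_□ ≤ ‖U^φ‖_□`. Conversely, for any `S', T' ⊆ Ω'` the push-forwards of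
`μ'` restricted to `S'` and `T'` are bounded by `μ`, hence have densities `f, g` with values in
`[0, 1]`, and `∫_{S'×T'} U^φ = ∫∫ f(x) U(x,y) g(y)`. Such a bilinear expression is bounded by the
cut norm: it is affine in `f`, so replacing `f` by the indicator of `{h > 0}` or `{h < 0}`, where
`h x = ∫ U(x,y) g(y) dy`, does not decrease its absolute value, and likewise for `g`.
This second bound also shows that the set whose supremum is `‖U^φ‖_□` is bounded above, so no
integrability of `U^φ` is needed for the first. -/

open Function Set

section CutNorm

variable {Ω : Type*} [MeasurableSpace Ω] {μ : Measure Ω} {U : Ω → Ω → ℝ}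

lemma cutNorm_le {c : ℝ}
    (h : ∀ S T, MeasurableSet S → MeasurableSet T → |∫ x in S, ∫ y in T, U x y ∂μ ∂μ| ≤ c) :
    cutNorm μ U ≤ c :=
  csSup_le ⟨_, ∅, ∅, .empty, .empty, rfl⟩ <| by
    rintro _ ⟨S, T, hS, hT, rfl⟩
    exact h S T hS hT

lemma abs_setIntegral_setIntegral_le_cutNorm_of_forall_le {c : ℝ}
    (h : ∀ S T, MeasurableSet S → MeasurableSet T → |∫ x in S, ∫ y in T, U x y ∂μ ∂μ| ≤ c)
    {S T : Set Ω} (hS : MeasurableSet S) (hT : MeasurableSet T) :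
    |∫ x in S, ∫ y in T, U x y ∂μ ∂μ| ≤ cutNorm μ U :=
  le_csSup ⟨c, by rintro _ ⟨S, T, hS, hT, rfl⟩; exact h S T hS hT⟩ ⟨S, T, hS, hT, rfl⟩

lemma abs_setIntegral_setIntegral_le_integral_abs [SigmaFinite μ]
    (hU : Integrable (uncurry U) (μ.prod μ)) (S T : Set Ω) :
    |∫ x in S, ∫ y in T, U x y ∂μ ∂μ| ≤ ∫ z, |uncurry U z| ∂μ.prod μ :=
  calc |∫ x in S, ∫ y in T, U x y ∂μ ∂μ|
      = |∫ z in S ×ˢ T, uncurry U z ∂μ.prod μ| := by rw [setIntegral_prod _ hU.integrableOn]; rfl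
    _ ≤ ∫ z in S ×ˢ T, |uncurry U z| ∂μ.prod μ := abs_integral_le_integral_abs
    _ ≤ ∫ z, |uncurry U z| ∂μ.prod μ :=
      setIntegral_le_integral hU.abs (ae_of_all _ fun _ => abs_nonneg _)

lemma abs_setIntegral_setIntegral_le_cutNorm [SigmaFinite μ]
    (hU : Integrable (uncurry U) (μ.prod μ)) {S T : Set Ω} (hS : MeasurableSet S)
    (hT : MeasurableSet T) :
    |∫ x in S, ∫ y in T, U x y ∂μ ∂μ| ≤ cutNorm μ U :=
  abs_setIntegral_setIntegral_le_cutNorm_of_forall_le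
    (fun S T _ _ => abs_setIntegral_setIntegral_le_integral_abs hU S T) hS hT

end CutNorm

section Bilinear

variable {Ω : Type*} [MeasurableSpace Ω] {μ : Measure Ω}

lemma exists_measurableSet_abs_integral_mul_le {f h : Ω → ℝ} (hf : Measurable f)
    (hf01 : ∀ x, f x ∈ Icc 0 1) (hh : Measurable h) (hhi : Integrable h μ) :
    ∃ S, MeasurableSet S ∧ |∫ x, f x * h x ∂μ| ≤ |∫ x in S, h x ∂μ| := by
  have hfh : Integrable (fun x => f x * h x) μ :=
    hhi.bdd_mul hf.aestronglyMeasurable (c := 1) <| ae_of_all _ fun x => by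
      rw [Real.norm_eq_abs, abs_le]; constructor <;> linarith [(hf01 x).1, (hf01 x).2]
  have hpos : MeasurableSet {x | 0 < h x} := measurableSet_lt measurable_const hh
  have hneg : MeasurableSet {x | h x < 0} := measurableSet_lt hh measurable_const
  have hupper : ∫ x, f x * h x ∂μ ≤ ∫ x in {x | 0 < h x}, h x ∂μ := by
    rw [← integral_indicator hpos]
    refine integral_mono hfh (hhi.indicator hpos) fun x => ?_
    by_cases hx : 0 < h x
    · rw [indicator_of_mem (s := {x | 0 < h x}) hx]; nlinarith [(hf01 x).2]
    · rw [indicator_of_notMem (s := {x | 0 < h x}) hx]; nlinarith [(hf01 x).1]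
  have hlower : ∫ x in {x | h x < 0}, h x ∂μ ≤ ∫ x, f x * h x ∂μ := by
    rw [← integral_indicator hneg]
    refine integral_mono (hhi.indicator hneg) hfh fun x => ?_
    by_cases hx : h x < 0
    · rw [indicator_of_mem (s := {x | h x < 0}) hx]; nlinarith [(hf01 x).2]
    · rw [indicator_of_notMem (s := {x | h x < 0}) hx]; nlinarith [(hf01 x).1]
  rcases le_total |∫ x in {x | h x < 0}, h x ∂μ| |∫ x in {x | 0 < h x}, h x ∂μ| with hle | hle
  · exact ⟨_, hpos, (abs_le_max_abs_abs hlower hupper).trans (max_le hle le_rfl)⟩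
  · exact ⟨_, hneg, (abs_le_max_abs_abs hlower hupper).trans (max_le le_rfl hle)⟩

lemma exists_density_mem_Icc_of_le {ν : Measure Ω} [SigmaFinite μ] (hνμ : ν ≤ μ) :
    ∃ f : Ω → ℝ, Measurable f ∧ (∀ x, f x ∈ Icc 0 1) ∧
      ∀ F : Ω → ℝ, ∫ x, F x ∂ν = ∫ x, f x * F x ∂μ := by
  have : SigmaFinite ν := Measure.sigmaFinite_of_le μ hνμ
  refine ⟨fun x => min (ν.rnDeriv μ x).toReal 1,
    (ν.measurable_rnDeriv μ).ennreal_toReal.min measurable_const,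
    fun x => ⟨le_min toReal_nonneg zero_le_one, min_le_right _ _⟩, fun F => ?_⟩
  rw [← integral_rnDeriv_smul hνμ.absolutelyContinuous]
  refine integral_congr_ae ?_
  filter_upwards [Measure.rnDeriv_le_one_of_le hνμ] with x hx
  rw [min_eq_left (by simpa using toReal_mono one_ne_top hx), smul_eq_mul]

lemma abs_integral_mul_integral_mul_le_cutNorm [SigmaFinite μ] {U : Ω → Ω → ℝ}
    (hUm : Measurable (uncurry U)) (hU : Integrable (uncurry U) (μ.prod μ)) {f g : Ω → ℝ}
    (hf : Measurable f) (hf01 : ∀ x, f x ∈ Icc 0 1) (hg : Measurable g)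
    (hg01 : ∀ y, g y ∈ Icc 0 1) :
    |∫ x, f x * ∫ y, g y * U x y ∂μ ∂μ| ≤ cutNorm μ U := by
  have hgUm : Measurable (uncurry fun x y => g y * U x y) := (hg.comp measurable_snd).mul hUm
  have hgU : Integrable (uncurry fun x y => g y * U x y) (μ.prod μ) :=
    hU.bdd_mul (hg.comp measurable_snd).aestronglyMeasurable (c := 1) <| ae_of_all _ fun z => by
      rw [Real.norm_eq_abs, abs_le]; constructor <;> linarith [(hg01 z.2).1, (hg01 z.2).2]
  have hprod_le (S T : Set Ω) : (μ.restrict S).prod (μ.restrict T) ≤ μ.prod μ :=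
    Measure.prod_mono Measure.restrict_le_self Measure.restrict_le_self
  obtain ⟨S, hS, hfS⟩ := exists_measurableSet_abs_integral_mul_le hf hf01
    hgUm.stronglyMeasurable.integral_prod_right'.measurable hgU.integral_prod_left
  have hswap : ∫ x in S, ∫ y, g y * U x y ∂μ ∂μ = ∫ y, g y * ∫ x in S, U x y ∂μ ∂μ := by
    rw [integral_integral_swap (hgU.mono_measure (by simpa using hprod_le S univ))]
    simp_rw [integral_const_mul]
  obtain ⟨T, hT, hgT⟩ := exists_measurableSet_abs_integral_mul_le hg hg01
    (hUm.comp measurable_swap).stronglyMeasurable.integral_prod_right'.measurable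
    (hU.mono_measure (by simpa using hprod_le S univ)).swap.integral_prod_left
  calc |∫ x, f x * ∫ y, g y * U x y ∂μ ∂μ|
      ≤ |∫ y, g y * ∫ x in S, U x y ∂μ ∂μ| := hswap ▸ hfS
    _ ≤ |∫ y in T, ∫ x in S, U x y ∂μ ∂μ| := hgT
    _ = |∫ x in S, ∫ y in T, U x y ∂μ ∂μ| := by
      rw [integral_integral_swap (hU.mono_measure (hprod_le S T))]
    _ ≤ cutNorm μ U := abs_setIntegral_setIntegral_le_cutNorm hU hS hT

end Bilinear

section Pullback

variable {Ω Ω' : Type*} [MeasurableSpace Ω] [MeasurableSpace Ω'] {μ : Measure Ω}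
  {μ' : Measure Ω'} {φ : Ω' → Ω} {U : Ω → Ω → ℝ}

lemma MeasureTheory.MeasurePreserving.setIntegral_preimage_comp {E : Type*}
    [NormedAddCommGroup E] [NormedSpace ℝ E] (hφ : MeasurePreserving φ μ' μ) {F : Ω → E}
    (hF : AEStronglyMeasurable F μ) {S : Set Ω} (hS : MeasurableSet S) :
    ∫ x in φ ⁻¹' S, F (φ x) ∂μ' = ∫ x in S, F x ∂μ := by
  rw [← setIntegral_map hS (hφ.map_eq ▸ hF) hφ.measurable.aemeasurable, hφ.map_eq]

lemma setIntegral_preimage_setIntegral_preimage_comp [SFinite μ] (hφ : MeasurePreserving φ μ' μ)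
    (hUm : Measurable (uncurry U)) {S T : Set Ω} (hS : MeasurableSet S) (hT : MeasurableSet T) :
    ∫ x' in φ ⁻¹' S, ∫ y' in φ ⁻¹' T, U (φ x') (φ y') ∂μ' ∂μ' = ∫ x in S, ∫ y in T, U x y ∂μ ∂μ :=
  calc ∫ x' in φ ⁻¹' S, ∫ y' in φ ⁻¹' T, U (φ x') (φ y') ∂μ' ∂μ'
      = ∫ x' in φ ⁻¹' S, ∫ y in T, U (φ x') y ∂μ ∂μ' := by
        congr 1; funext x'
        exact hφ.setIntegral_preimage_comp hUm.of_uncurry_left.aestronglyMeasurable hT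
    _ = ∫ x in S, ∫ y in T, U x y ∂μ ∂μ :=
        hφ.setIntegral_preimage_comp
          (hUm.stronglyMeasurable.integral_prod_right' (ν := μ.restrict T)).aestronglyMeasurable hS

lemma abs_setIntegral_setIntegral_comp_le_cutNorm [SigmaFinite μ] (hφ : MeasurePreserving φ μ' μ)
    (hUm : Measurable (uncurry U)) (hU : Integrable (uncurry U) (μ.prod μ)) (S' T' : Set Ω') :
    |∫ x' in S', ∫ y' in T', U (φ x') (φ y') ∂μ' ∂μ'| ≤ cutNorm μ U := by
  have hle (s : Set Ω') : (μ'.restrict s).map φ ≤ μ :=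
    hφ.map_eq ▸ Measure.map_mono Measure.restrict_le_self hφ.measurable
  have hpush (s : Set Ω') {F : Ω → ℝ} (hF : Measurable F) :
      ∫ x' in s, F (φ x') ∂μ' = ∫ x, F x ∂(μ'.restrict s).map φ :=
    (integral_map hφ.measurable.aemeasurable hF.aestronglyMeasurable).symm
  obtain ⟨f, hf, hf01, hfF⟩ := exists_density_mem_Icc_of_le (hle S')
  obtain ⟨g, hg, hg01, hgF⟩ := exists_density_mem_Icc_of_le (hle T')
  have hgUm : Measurable (uncurry fun x y => g y * U x y) := (hg.comp measurable_snd).mul hUm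
  calc |∫ x' in S', ∫ y' in T', U (φ x') (φ y') ∂μ' ∂μ'|
      = |∫ x' in S', ∫ y, g y * U (φ x') y ∂μ ∂μ'| := by
        congr 2; funext x'
        rw [hpush T' hUm.of_uncurry_left, hgF]
    _ = |∫ x, f x * ∫ y, g y * U x y ∂μ ∂μ| := by
        rw [hpush S' (F := fun x => ∫ y, g y * U x y ∂μ)
          hgUm.stronglyMeasurable.integral_prod_right'.measurable, hfF]
    _ ≤ cutNorm μ U := abs_integral_mul_integral_mul_le_cutNorm hUm hU hf hf01 hg hg01

end Pullback

theorem stmt5_general {Ω Ω' : Type*} [MeasurableSpace Ω] [MeasurableSpace Ω']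
    (μ : Measure Ω) (μ' : Measure Ω') [SigmaFinite μ]
    (φ : Ω' → Ω) (hφ : MeasurePreserving φ μ' μ)
    (U : Ω → Ω → ℝ) (hmeas : Measurable (Function.uncurry U))
    (hU1 : Integrable (Function.uncurry U) (μ.prod μ)) :
    cutNorm μ U = cutNorm μ' (fun x' y' => U (φ x') (φ y')) := by
  have hpullback (S' T' : Set Ω') := abs_setIntegral_setIntegral_comp_le_cutNorm hφ hmeas hU1 S' T'
  refine le_antisymm (cutNorm_le fun S T hS hT => ?_) (cutNorm_le fun S' T' _ _ => hpullback S' T')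
  rw [← setIntegral_preimage_setIntegral_preimage_comp hφ hmeas hS hT]
  exact abs_setIntegral_setIntegral_le_cutNorm_of_forall_le (fun S' T' _ _ => hpullback S' T')
    (hφ.measurable hS) (hφ.measurable hT)

/-- Pulling back an integrable kernel `U : Ω × Ω → ℝ` along a
measure-preserving map `φ : Ω' → Ω` between σ-finite measure spaces leaves the cut norm
unchanged: `‖U‖_□ = ‖U^φ‖_□`, where `U^φ(x', y') = U(φ x', φ y')`. -/
theorem stmt5 {Ω Ω' : Type*} [MeasurableSpace Ω] [MeasurableSpace Ω']
    (μ : Measure Ω) (μ' : Measure Ω') [SigmaFinite μ] [SigmaFinite μ']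
    (φ : Ω' → Ω) (hφ : MeasurePreserving φ μ' μ)
    (U : Ω → Ω → ℝ) (hmeas : Measurable (Function.uncurry U))
    (hU1 : Integrable (Function.uncurry U) (μ.prod μ)) :
    cutNorm μ U = cutNorm μ' (fun x' y' => U (φ x') (φ y')) :=
  stmt5_general μ μ' φ hφ U hmeas hU1
end

section
/- Let G be a graph on n vertices with no isolated vertices, color each vertex independently red or blue with probability 1/2, and let X be the number of red vertices having at least one blue neighbor. Then for any t > 0 and t' = 2t + log 4, E[e^{t'X}] ≥ e^{tn}. -/
/-!
Colour red exactly the complement of a dominating set `B` with `2 |B| ≤ n`. Every red vertex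
then has a blue neighbour, so this single colouring contributes `e^{t' (n - |B|)} ≥ e^{t' n / 2}
= e^{t n} 2^n` to the sum over all `2^n` colourings. Such a `B` exists when there are no isolated
vertices (Ore): a maximal independent set dominates, and so does its complement.
-/

open Finset

namespace SimpleGraph

variable {V : Type*} (G : SimpleGraph V)

def IsDominating (s : Set V) : Prop :=
  ∀ v ∉ s, ∃ w ∈ s, G.Adj v w

variable {G}

lemma isDominating_of_maximal_isIndepSet {s : Set V} (hs : Maximal G.IsIndepSet s) :
    G.IsDominating s := by
  intro v hv
  by_contra! hcon
  have hins : G.IsIndepSet (insert v s) :=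
    hs.prop.insert fun w hw _ => ⟨hcon w hw, fun hwv => hcon w hw hwv.symm⟩
  exact hv (hs.mem_of_prop_insert hins)

lemma IsIndepSet.isDominating_compl (hG : ∀ v, ∃ w, G.Adj v w) {s : Set V}
    (hs : G.IsIndepSet s) : G.IsDominating sᶜ := by
  intro v hv
  obtain ⟨w, hvw⟩ := hG v
  exact ⟨w, fun hw => hs (not_not.mp hv) hw hvw.ne hvw, hvw⟩

lemma exists_isDominating_two_mul_card_le [Fintype V]
    (hG : ∀ v, ∃ w, G.Adj v w) :
    ∃ B : Finset V, G.IsDominating B ∧ 2 * #B ≤ Fintype.card V := by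
  classical
  obtain ⟨I, hI⟩ := (Set.toFinite {I : Set V | G.IsIndepSet I}).exists_maximal
    ⟨∅, Set.pairwise_empty _⟩
  rcases le_or_gt (2 * #I.toFinset) (Fintype.card V) with h | h
  · exact ⟨I.toFinset, by simpa using isDominating_of_maximal_isIndepSet hI, h⟩
  · refine ⟨I.toFinsetᶜ, by simpa using hI.prop.isDominating_compl hG, ?_⟩
    rw [card_compl]
    omega

lemma filter_red_and_exists_blue_neighbor_eq [Fintype V] [DecidableRel G.Adj] {c : V → Bool}
    (hc : G.IsDominating {v | c v = false}) :
    univ.filter (fun v => c v = true ∧ ∃ w ∈ G.neighborFinset v, c w = false) =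
      univ.filter (fun v => c v = true) := by
  refine filter_congr fun v _ => and_iff_left_of_imp fun hv => ?_
  obtain ⟨w, hw, hvw⟩ := hc v (by simpa using hv)
  exact ⟨w, (G.mem_neighborFinset v w).2 hvw, hw⟩

end SimpleGraph

lemma exp_mul_mul_two_pow_le {t : ℝ} (ht : 0 ≤ 2 * t + Real.log 4) {m n : ℕ} (hmn : 2 * m ≤ n) :
    Real.exp (t * n) * 2 ^ n ≤ Real.exp ((2 * t + Real.log 4) * (n - m)) := by
  have hlog4 : Real.log 4 = 2 * Real.log 2 := by
    rw [show (4 : ℝ) = 2 ^ 2 by norm_num, Real.log_pow, Nat.cast_ofNat]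
  have hm : (n : ℝ) / 2 ≤ n - m := by
    have : (2 * m : ℝ) ≤ n := by exact_mod_cast hmn
    linarith
  calc Real.exp (t * n) * 2 ^ n = Real.exp ((2 * t + Real.log 4) * (n / 2)) := by
        rw [← Real.rpow_natCast, Real.rpow_def_of_pos two_pos, ← Real.exp_add, hlog4]
        ring_nf
    _ ≤ Real.exp ((2 * t + Real.log 4) * (n - m)) := by gcongr

/-- Let `G` be a graph on `n` vertices with no isolated vertices.  Color
each vertex independently red or blue with probability `1/2`, and let `X` be the number of
red vertices having at least one blue neighbor.  Then for any `t > 0` and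
`t' = 2t + log 4`, `E[e^{t' X}] ≥ e^{t n}`.  (The expectation is written as the average
over all `2^n` colorings `c : V → Bool`, with `red = true`.) -/
theorem stmt12 {V : Type*} [Fintype V] [DecidableEq V]
    (G : SimpleGraph V) [DecidableRel G.Adj]
    (hG : ∀ v : V, 0 < G.degree v) (t : ℝ) (ht : 0 < t) :
    Real.exp (t * Fintype.card V) ≤
      (∑ c : V → Bool,
          Real.exp ((2 * t + Real.log 4) *
            (Finset.univ.filter
              (fun v : V => c v = true ∧ ∃ w ∈ G.neighborFinset v, c w = false)).card))
        / 2 ^ Fintype.card V := by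
  obtain ⟨B, hBdom, hBcard⟩ :=
    G.exists_isDominating_two_mul_card_le fun v => (G.degree_pos_iff_exists_adj v).1 (hG v)
  obtain ⟨c, hc, hred⟩ : ∃ c : V → Bool, G.IsDominating {v | c v = false} ∧
      #(univ.filter fun v => c v = true) = Fintype.card V - #B :=
    ⟨fun v => decide (v ∉ B), by simpa using hBdom, by simp [filter_not, card_univ_sdiff]⟩
  rw [le_div_iff₀ (by positivity)]
  calc Real.exp (t * Fintype.card V) * 2 ^ Fintype.card V
      ≤ Real.exp ((2 * t + Real.log 4) * (Fintype.card V - #B : ℕ)) := by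
        rw [Nat.cast_sub (card_le_univ B)]
        exact exp_mul_mul_two_pow_le (by positivity) hBcard
    _ ≤ _ := by
        rw [← hred, ← SimpleGraph.filter_red_and_exists_blue_neighbor_eq hc]
        apply single_le_sum (fun _ _ => (Real.exp_pos _).le) (mem_univ c)
end

section
/- Suppose G and G' are random finite graphs such that for every finite graph F, E[inj(F,G)] = E[inj(F,G')], where inj(F,·) is the number of injective homomorphisms of F. Let X be the number of vertices of G, and suppose E[(2+ε)^X] < ∞ for some ε > 0. Then G and G' have the same distribution up to isomorphism. -/
open MeasureTheory ENNReal

/-- The type of finite simple graphs (with vertex set some `Fin n`), made into a measurable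
space with the discrete (⊤) σ-algebra. -/
abbrev FinGraph : Type := Σ n : ℕ, SimpleGraph (Fin n)

instance : MeasurableSpace FinGraph := ⊤

/-- `injCount F G` is the number of injective graph homomorphisms from `F` into `G`. -/
noncomputable def injCount {m n : ℕ} (F : SimpleGraph (Fin m)) (G : SimpleGraph (Fin n)) :
    ℕ :=
  Nat.card {f : Fin m → Fin n //
    Function.Injective f ∧ ∀ a b, F.Adj a b → G.Adj (f a) (f b)}

/-!
For `F` on `m` vertices and `H` on `n` vertices, inclusion–exclusion over sets `s` of non-edges
of `F` turns counts of injective homomorphisms into counts of induced copies; adding `k` isolated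
vertices to `F` multiplies `inj(F, H)` by the falling factorial `(n - m)ₖ`, and the alternating
binomial sum over `k` then kills every `H` with `n > m`. Altogether
`∑_{k, s} (-1)^(k + |s|) inj(F ∪ s + k K₁, H) / k! = |Aut F| · [H ≅ F]`.
All terms are nonnegative, so sorting them by sign gives `A(H) = |Aut F| · [H ≅ F] + B(H)` where
`A` and `B` are series of moments `inj(·, H)`; hence `A` and `B` have the same expectation under
`G` and `G'`. The series `A + B` is `O(2ⁿ nᵐ) = O((2 + ε)ⁿ)`, so `E B < ∞` and it can be cancelled.
-/

open Finset SimpleGraph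

section Counting

variable {m n : ℕ}

open scoped Classical in
theorem injCount_eq_sum (F : SimpleGraph (Fin m)) (H : SimpleGraph (Fin n)) :
    injCount F H =
      ∑ f : Fin m → Fin n, if Function.Injective f ∧ F ≤ H.comap f then 1 else 0 := by
  rw [injCount, Nat.card_eq_fintype_card, Fintype.card_subtype, Finset.card_filter]
  exact Finset.sum_congr rfl fun f _ => if_congr Iff.rfl rfl rfl

theorem injCount_le_pow (F : SimpleGraph (Fin m)) (H : SimpleGraph (Fin n)) :
    injCount F H ≤ n ^ m :=
  calc injCount F H ≤ Nat.card (Fin m → Fin n) :=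
        Nat.card_le_card_of_injective _ Subtype.val_injective
    _ = n ^ m := by simp

def padIsolated (J : SimpleGraph (Fin m)) (k : ℕ) : SimpleGraph (Fin (m + k)) :=
  J.map (Fin.castAddEmb k)

theorem card_injective_disjoint_range {f : Fin m → Fin n} (hf : Function.Injective f)
    (k : ℕ) :
    Nat.card {g : Fin k → Fin n // Function.Injective g ∧ ∀ i j, f i ≠ g j} =
      (n - m).descFactorial k := by
  let e : {g : Fin k → Fin n // Function.Injective g ∧ ∀ i j, f i ≠ g j} ≃
      (Fin k ↪ ((Set.range f)ᶜ : Set (Fin n))) :=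
    { toFun g := ⟨fun j => ⟨g.1 j, by rintro ⟨i, hi⟩; exact g.2.2 i j hi⟩,
        fun j j' h => g.2.1 (congrArg Subtype.val h)⟩
      invFun g := ⟨fun j => g j, Subtype.val_injective.comp g.injective,
        fun i j hij => (g j).2 ⟨i, hij⟩⟩
      left_inv _ := rfl
      right_inv _ := rfl }
  classical
  rw [Nat.card_congr e, Nat.card_eq_fintype_card, Fintype.card_embedding_eq, Fintype.card_fin,
    Fintype.card_compl_set, Set.card_range_of_injective hf, Fintype.card_fin, Fintype.card_fin]

theorem injCount_padIsolated (J : SimpleGraph (Fin m)) (k : ℕ) (H : SimpleGraph (Fin n)) :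
    injCount (padIsolated J k) H = injCount J H * (n - m).descFactorial k := by
  classical
  rw [injCount_eq_sum, injCount_eq_sum, ← (Fin.appendEquiv m k).sum_comp,
    Fintype.sum_prod_type, Finset.sum_mul]
  refine Finset.sum_congr rfl fun f _ => ?_
  have hfiber (g : Fin k → Fin n) :
      (if Function.Injective (Fin.append f g) ∧ padIsolated J k ≤ H.comap (Fin.append f g)
        then 1 else 0) =
      if Function.Injective f ∧ J ≤ H.comap f then
        (if Function.Injective g ∧ ∀ i j, f i ≠ g j then 1 else 0) else 0 := by
    rw [← ite_and]
    refine if_congr ?_ rfl rfl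
    rw [Fin.append_injective_iff, padIsolated, map_le_iff_le_comap, comap_comap,
      show Fin.append f g ∘ Fin.castAddEmb k = f from funext (Fin.append_left f g)]
    tauto
  refine (Finset.sum_congr rfl fun g _ => hfiber g).trans ?_
  split_ifs with hf
  · rw [one_mul, ← card_injective_disjoint_range hf.1 k, Nat.card_eq_fintype_card,
      Fintype.card_subtype, Finset.card_filter]
  · rw [zero_mul, Finset.sum_const_zero]

end Counting

section InclusionExclusion

variable {V W : Type*}

theorem SimpleGraph.mem_edgeSet_compl {F : SimpleGraph V} {e : Sym2 V} :
    e ∈ Fᶜ.edgeSet ↔ ¬e.IsDiag ∧ e ∉ F.edgeSet := by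
  induction e using Sym2.ind
  simp [compl_adj]

open scoped Classical in
theorem SimpleGraph.sum_neg_one_pow_mul_sup_fromEdgeSet_le [Fintype V] [DecidableEq V]
    (F K : SimpleGraph V) [DecidableRel F.Adj] :
    ∑ s ∈ Fᶜ.edgeFinset.powerset,
        (-1 : ℤ) ^ #s * (if F ⊔ fromEdgeSet ↑s ≤ K then 1 else 0) =
      if F = K then 1 else 0 := by
  simp only [mul_ite, mul_one, mul_zero]
  rw [← Finset.sum_filter]
  by_cases hFK : F ≤ K
  · have hfilter : Fᶜ.edgeFinset.powerset.filter
        (fun s : Finset (Sym2 V) => F ⊔ fromEdgeSet (s : Set (Sym2 V)) ≤ K) =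
        (K \ F).edgeFinset.powerset := by
      ext s
      simp only [mem_filter, mem_powerset, sup_le_iff, hFK, true_and, fromEdgeSet_le,
        Set.subset_def, Finset.subset_iff, mem_edgeFinset, edgeSet_sdiff]
      refine ⟨fun ⟨hF, hK⟩ e he => ?_, fun h => ⟨fun e he => ?_, fun e he => ?_⟩⟩
      · obtain ⟨hdiag, hnF⟩ := mem_edgeSet_compl.1 (hF he)
        exact ⟨hK e ⟨he, hdiag⟩, hnF⟩
      · exact mem_edgeSet_compl.2 ⟨not_isDiag_of_mem_edgeSet _ (h he).1, (h he).2⟩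
      · exact (h he.1).1
    rw [hfilter, sum_powerset_neg_one_pow_card]
    exact if_congr (by rw [edgeFinset_eq_empty, sdiff_eq_bot_iff, le_antisymm_iff,
      and_iff_right hFK]) rfl rfl
  · rw [if_neg (fun h => hFK h.le), Finset.sum_eq_zero]
    intro s hs
    exact absurd (le_sup_left.trans (mem_filter.1 hs).2) hFK

def SimpleGraph.Embedding.equivInjectiveComapEq (F : SimpleGraph V) (H : SimpleGraph W) :
    (F ↪g H) ≃ {f : V → W // Function.Injective f ∧ H.comap f = F} where
  toFun e := ⟨e, e.injective, by ext; exact e.map_adj_iff⟩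
  invFun f := ⟨⟨f.1, f.2.1⟩, fun {a b} => by
    change (H.comap f.1).Adj a b ↔ F.Adj a b
    rw [f.2.2]⟩
  left_inv _ := rfl
  right_inv _ := rfl

theorem SimpleGraph.card_embedding_eq_card_iso [Fintype V] [Fintype W] (F : SimpleGraph V)
    (H : SimpleGraph W) (h : Fintype.card W ≤ Fintype.card V) :
    Nat.card (F ↪g H) = Nat.card (F ≃g H) :=
  Nat.card_congr
    { toFun e := RelIso.ofSurjective e ((Fintype.bijective_iff_injective_and_card e).2
        ⟨e.injective, (Fintype.card_le_of_injective e e.injective).antisymm h⟩).2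
      invFun e := e.toEmbedding
      left_inv _ := rfl
      right_inv _ := RelIso.ext fun _ => rfl }

open scoped Classical in
theorem SimpleGraph.card_iso_eq_ite (F : SimpleGraph V) (H : SimpleGraph W) :
    Nat.card (F ≃g H) = if Nonempty (H ≃g F) then Nat.card (F ≃g F) else 0 := by
  split_ifs with h
  · obtain ⟨e⟩ := h
    exact Nat.card_congr ⟨fun φ => φ.trans e, fun ψ => ψ.trans e.symm,
      fun φ => by ext; simp, fun ψ => by ext; simp⟩
  · exact Nat.card_eq_zero.2 (Or.inl ⟨fun e => h ⟨e.symm⟩⟩)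

end InclusionExclusion

section Coefficients

open scoped Classical

variable {m n : ℕ}

theorem sum_neg_one_pow_mul_injCount_sup_eq_card_embedding (F : SimpleGraph (Fin m))
    (H : SimpleGraph (Fin n)) :
    ∑ s ∈ Fᶜ.edgeFinset.powerset, (-1 : ℤ) ^ #s * injCount (F ⊔ fromEdgeSet ↑s) H =
      Nat.card (F ↪g H) := by
  have hcount : (Nat.card (F ↪g H) : ℤ) = ∑ f : Fin m → Fin n,
      if Function.Injective f then (if F = H.comap f then 1 else 0) else 0 := by
    rw [Nat.card_congr (Embedding.equivInjectiveComapEq F H), Nat.card_eq_fintype_card,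
      Fintype.card_subtype, Finset.card_filter]
    push_cast
    exact Finset.sum_congr rfl fun f _ => by rw [← ite_and, eq_comm (a := F)]
  simp only [hcount, injCount_eq_sum, Nat.cast_sum, Nat.cast_ite, Nat.cast_one, Nat.cast_zero,
    ite_and, Finset.mul_sum]
  rw [Finset.sum_comm]
  refine Finset.sum_congr rfl fun f _ => ?_
  by_cases hf : Function.Injective f
  · simp only [hf, if_true]
    exact sum_neg_one_pow_mul_sup_fromEdgeSet_le F (H.comap f)
  · simp [hf]

noncomputable def isoCoeff (F : SimpleGraph (Fin m)) (H : SimpleGraph (Fin n))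
    (p : ℕ × Finset (Sym2 (Fin m))) : ℕ :=
  if p.2 ⊆ Fᶜ.edgeFinset then (n - m).choose p.1 * injCount (F ⊔ fromEdgeSet ↑p.2) H else 0

theorem isoCoeff_eq_zero_of_notMem (F : SimpleGraph (Fin m)) (H : SimpleGraph (Fin n))
    {p : ℕ × Finset (Sym2 (Fin m))} (hp : p ∉ range (n - m + 1) ×ˢ Fᶜ.edgeFinset.powerset) :
    isoCoeff F H p = 0 := by
  rw [isoCoeff]
  split_ifs with hs
  · rw [Nat.choose_eq_zero_of_lt, zero_mul]
    simpa [hs] using hp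
  · rfl

theorem sum_neg_one_pow_mul_isoCoeff (F : SimpleGraph (Fin m)) (H : SimpleGraph (Fin n)) :
    ∑ p ∈ range (n - m + 1) ×ˢ Fᶜ.edgeFinset.powerset,
        (-1 : ℤ) ^ (p.1 + #p.2) * isoCoeff F H p =
      ((if Nonempty (H ≃g F) then Nat.card (F ≃g F) else 0 : ℕ) : ℤ) := by
  calc ∑ p ∈ range (n - m + 1) ×ˢ Fᶜ.edgeFinset.powerset,
        (-1 : ℤ) ^ (p.1 + #p.2) * isoCoeff F H p
      = (∑ k ∈ range (n - m + 1), (-1 : ℤ) ^ k * (n - m).choose k) *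
          ∑ s ∈ Fᶜ.edgeFinset.powerset, (-1 : ℤ) ^ #s * injCount (F ⊔ fromEdgeSet ↑s) H := by
        rw [Finset.sum_product, Finset.sum_mul_sum]
        refine Finset.sum_congr rfl fun k _ => Finset.sum_congr rfl fun s hs => ?_
        rw [isoCoeff, if_pos (mem_powerset.1 hs)]
        push_cast
        ring
    _ = if n ≤ m then (Nat.card (F ↪g H) : ℤ) else 0 := by
        rw [Int.alternating_sum_range_choose, sum_neg_one_pow_mul_injCount_sup_eq_card_embedding]
        simp only [Nat.sub_eq_zero_iff_le, ite_mul, one_mul, zero_mul]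
    _ = _ := by
        split_ifs with hnm hiso hiso
        · rw [card_embedding_eq_card_iso F H (by simpa using hnm), card_iso_eq_ite,
            if_pos hiso]
        · rw [card_embedding_eq_card_iso F H (by simpa using hnm), card_iso_eq_ite,
            if_neg hiso]
        · exact absurd (by simpa using Fintype.card_congr hiso.some.toEquiv : n = m).le hnm
        · rfl

theorem sum_isoCoeff_le (F : SimpleGraph (Fin m)) (H : SimpleGraph (Fin n)) :
    ∑ p ∈ range (n - m + 1) ×ˢ Fᶜ.edgeFinset.powerset, isoCoeff F H p ≤
      2 ^ #Fᶜ.edgeFinset * (2 ^ n * n ^ m) :=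
  calc ∑ p ∈ range (n - m + 1) ×ˢ Fᶜ.edgeFinset.powerset, isoCoeff F H p
      ≤ ∑ p ∈ range (n - m + 1) ×ˢ Fᶜ.edgeFinset.powerset, (n - m).choose p.1 * n ^ m :=
        Finset.sum_le_sum fun p hp => by
          rw [isoCoeff, if_pos (mem_powerset.1 (mem_product.1 hp).2)]
          exact Nat.mul_le_mul_left _ (injCount_le_pow _ _)
    _ = 2 ^ #Fᶜ.edgeFinset * (2 ^ (n - m) * n ^ m) := by
        simp only [Finset.sum_product, Finset.sum_const, card_powerset, smul_eq_mul,
          ← Finset.sum_mul]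
        rw [← Finset.mul_sum, Nat.sum_range_choose]
        ring
    _ ≤ 2 ^ #Fᶜ.edgeFinset * (2 ^ n * n ^ m) := by
        gcongr
        · norm_num
        · omega

end Coefficients

theorem Finset.sum_ite_even_eq_add_sum_ite_odd {ι : Type*} (S : Finset ι) (e a : ι → ℕ)
    {b : ℕ} (h : ∑ i ∈ S, (-1 : ℤ) ^ e i * a i = b) :
    ∑ i ∈ S, (if Even (e i) then a i else 0) =
      b + ∑ i ∈ S, (if Even (e i) then 0 else a i) := by
  have hsplit : ∑ i ∈ S, (-1 : ℤ) ^ e i * a i =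
      ∑ i ∈ S, ((if Even (e i) then a i else 0 : ℕ) : ℤ) -
        ∑ i ∈ S, ((if Even (e i) then 0 else a i : ℕ) : ℤ) := by
    rw [← Finset.sum_sub_distrib]
    refine Finset.sum_congr rfl fun i _ => ?_
    rcases Nat.even_or_odd (e i) with he | he
    · simp [he, he.neg_one_pow]
    · simp [Nat.not_even_iff_odd.2 he, he.neg_one_pow]
  have hint : ∑ i ∈ S, ((if Even (e i) then a i else 0 : ℕ) : ℤ) =
      b + ∑ i ∈ S, ((if Even (e i) then 0 else a i : ℕ) : ℤ) := by
    linarith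
  exact_mod_cast hint

section Expansion

open scoped Classical

variable {m n : ℕ}

/-- The term `p = (k, s)` of the expansion of `[H ≅ F]`, written through `injCount` so that its
expectation is a moment. -/
noncomputable def isoTerm (F : SimpleGraph (Fin m)) (p : ℕ × Finset (Sym2 (Fin m)))
    (W : FinGraph) : ℝ≥0∞ :=
  if p.2 ⊆ Fᶜ.edgeFinset then
    (p.1.factorial : ℝ≥0∞)⁻¹ * injCount (padIsolated (F ⊔ fromEdgeSet ↑p.2) p.1) W.2
  else 0

theorem isoTerm_mk (F : SimpleGraph (Fin m)) (p : ℕ × Finset (Sym2 (Fin m)))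
    (H : SimpleGraph (Fin n)) : isoTerm F p ⟨n, H⟩ = isoCoeff F H p := by
  rw [isoTerm, isoCoeff]
  split_ifs
  · rw [injCount_padIsolated, Nat.descFactorial_eq_factorial_mul_choose]
    push_cast
    rw [mul_left_comm, ENNReal.inv_mul_cancel_left (by simp [Nat.factorial_ne_zero])
      (ENNReal.natCast_ne_top _), mul_comm]
  · rw [Nat.cast_zero]

theorem tsum_ite_even_isoTerm (F : SimpleGraph (Fin m)) (W : FinGraph) :
    ∑' p, (if Even (p.1 + #p.2) then isoTerm F p W else 0) =
      {W : FinGraph | Nonempty (W.2 ≃g F)}.indicator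
          (fun _ => (Nat.card (F ≃g F) : ℝ≥0∞)) W +
        ∑' p, (if Even (p.1 + #p.2) then 0 else isoTerm F p W) := by
  obtain ⟨n, H⟩ := W
  have hsupp : ∀ p ∉ range (n - m + 1) ×ˢ Fᶜ.edgeFinset.powerset, isoTerm F p ⟨n, H⟩ = 0 :=
    fun p hp => by rw [isoTerm_mk, isoCoeff_eq_zero_of_notMem F H hp, Nat.cast_zero]
  rw [tsum_eq_sum fun p hp => by rw [hsupp p hp, ite_self],
    tsum_eq_sum fun p hp => by rw [hsupp p hp, ite_self], Set.indicator_apply]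
  simp only [isoTerm_mk, Set.mem_ofPred_eq]
  exact_mod_cast sum_ite_even_eq_add_sum_ite_odd _ _ _ (sum_neg_one_pow_mul_isoCoeff F H)

theorem tsum_isoTerm_le (F : SimpleGraph (Fin m)) (W : FinGraph) :
    ∑' p, isoTerm F p W ≤ 2 ^ #Fᶜ.edgeFinset * ENNReal.ofReal ((W.1 : ℝ) ^ m * 2 ^ W.1) := by
  obtain ⟨n, H⟩ := W
  rw [tsum_eq_sum fun p hp => by rw [isoTerm_mk, isoCoeff_eq_zero_of_notMem F H hp, Nat.cast_zero]]
  simp only [isoTerm_mk]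
  calc ∑ p ∈ range (n - m + 1) ×ˢ Fᶜ.edgeFinset.powerset, (isoCoeff F H p : ℝ≥0∞)
      ≤ ((2 ^ #Fᶜ.edgeFinset * (2 ^ n * n ^ m) : ℕ) : ℝ≥0∞) := by
        exact_mod_cast sum_isoCoeff_le F H
    _ = 2 ^ #Fᶜ.edgeFinset * ENNReal.ofReal ((n : ℝ) ^ m * 2 ^ n) := by
        rw [show (n : ℝ) ^ m * 2 ^ n = ((2 ^ n * n ^ m : ℕ) : ℝ) by push_cast; ring,
          ENNReal.ofReal_natCast]
        push_cast
        rfl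

theorem exists_pow_mul_two_pow_le (m : ℕ) {ε : ℝ} (hε : 0 < ε) :
    ∃ C : ℝ, 0 ≤ C ∧ ∀ n : ℕ, (n : ℝ) ^ m * 2 ^ n ≤ C * (2 + ε) ^ n := by
  have hr : (1 : ℝ) < 1 + ε / 2 := by linarith
  obtain ⟨C, hC⟩ := (tendsto_pow_const_div_const_pow_of_one_lt m hr).bddAbove_range
  have hC' (n : ℕ) : (n : ℝ) ^ m ≤ C * (1 + ε / 2) ^ n :=
    (div_le_iff₀ (by positivity)).1 (hC ⟨n, rfl⟩)
  refine ⟨C, le_trans (by positivity) (hC ⟨0, rfl⟩), fun n => ?_⟩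
  calc (n : ℝ) ^ m * 2 ^ n ≤ C * (1 + ε / 2) ^ n * 2 ^ n := by gcongr; exact hC' n
    _ = C * (2 + ε) ^ n := by rw [mul_assoc, ← mul_pow]; ring

theorem exists_tsum_isoTerm_le (F : SimpleGraph (Fin m)) {ε : ℝ} (hε : 0 < ε) :
    ∃ C : ℝ≥0∞, C ≠ ∞ ∧ ∀ W, ∑' p, isoTerm F p W ≤ C * ENNReal.ofReal ((2 + ε) ^ W.1) := by
  obtain ⟨C, hC0, hC⟩ := exists_pow_mul_two_pow_le m hε
  refine ⟨2 ^ #Fᶜ.edgeFinset * ENNReal.ofReal C, by finiteness, fun W => ?_⟩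
  refine (tsum_isoTerm_le F W).trans ?_
  rw [mul_assoc, ← ENNReal.ofReal_mul hC0]
  gcongr _ * ENNReal.ofReal ?_
  exact hC W.1

end Expansion

theorem MeasureTheory.lintegral_eq_of_tsum_eq_add_tsum {α ι : Type*} [MeasurableSpace α]
    [Countable ι] {μ ν : Measure α} {f g : ι → α → ℝ≥0∞} {h : α → ℝ≥0∞}
    (hf : ∀ i, Measurable (f i)) (hg : ∀ i, Measurable (g i)) (hh : Measurable h)
    (hfμν : ∀ i, ∫⁻ x, f i x ∂μ = ∫⁻ x, f i x ∂ν)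
    (hgμν : ∀ i, ∫⁻ x, g i x ∂μ = ∫⁻ x, g i x ∂ν)
    (hsplit : ∀ x, ∑' i, f i x = h x + ∑' i, g i x) (hfin : ∫⁻ x, ∑' i, g i x ∂μ ≠ ∞) :
    ∫⁻ x, h x ∂μ = ∫⁻ x, h x ∂ν := by
  have hG : ∫⁻ x, ∑' i, g i x ∂μ = ∫⁻ x, ∑' i, g i x ∂ν := by
    rw [lintegral_tsum fun i => (hg i).aemeasurable,
      lintegral_tsum fun i => (hg i).aemeasurable]
    exact tsum_congr hgμν
  have hF : ∫⁻ x, h x ∂μ + ∫⁻ x, ∑' i, g i x ∂μ = ∫⁻ x, h x ∂ν + ∫⁻ x, ∑' i, g i x ∂ν := by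
    rw [← lintegral_add_left hh, ← lintegral_add_left hh]
    simp_rw [← hsplit]
    rw [lintegral_tsum fun i => (hf i).aemeasurable,
      lintegral_tsum fun i => (hf i).aemeasurable]
    exact tsum_congr hfμν
  rw [← hG] at hF
  exact (ENNReal.add_left_inj hfin).1 hF

theorem lintegral_isoTerm_eq {μ ν : Measure FinGraph}
    (hmom : ∀ (m : ℕ) (F : SimpleGraph (Fin m)),
      ∫⁻ W, (injCount F W.2 : ℝ≥0∞) ∂μ = ∫⁻ W, (injCount F W.2 : ℝ≥0∞) ∂ν)
    {m : ℕ} (F : SimpleGraph (Fin m)) (p : ℕ × Finset (Sym2 (Fin m))) :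
    ∫⁻ W, isoTerm F p W ∂μ = ∫⁻ W, isoTerm F p W ∂ν := by
  by_cases hs : p.2 ⊆ Fᶜ.edgeFinset
  · simp only [isoTerm, hs, if_true]
    rw [lintegral_const_mul _ measurable_from_top, lintegral_const_mul _ measurable_from_top,
      hmom]
  · simp [isoTerm, hs]

theorem measure_iso_eq_of_lintegral_injCount_eq {μ ν : Measure FinGraph}
    (hmom : ∀ (m : ℕ) (F : SimpleGraph (Fin m)),
      ∫⁻ W, (injCount F W.2 : ℝ≥0∞) ∂μ = ∫⁻ W, (injCount F W.2 : ℝ≥0∞) ∂ν)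
    {ε : ℝ} (hε : 0 < ε) (hexp : ∫⁻ W, ENNReal.ofReal ((2 + ε) ^ W.1) ∂μ ≠ ∞)
    {m : ℕ} (F : SimpleGraph (Fin m)) :
    μ {W | Nonempty (W.2 ≃g F)} = ν {W | Nonempty (W.2 ≃g F)} := by
  obtain ⟨C, hC, hbound⟩ := exists_tsum_isoTerm_le F hε
  have hodd : ∫⁻ W, ∑' p, (if Even (p.1 + #p.2) then 0 else isoTerm F p W) ∂μ ≠ ∞ := by
    refine ne_top_of_le_ne_top (ENNReal.mul_ne_top hC hexp) ?_
    rw [← lintegral_const_mul _ measurable_from_top]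
    refine lintegral_mono fun W => le_trans (ENNReal.tsum_le_tsum fun p => ?_) (hbound W)
    split_ifs <;> simp
  have key := lintegral_eq_of_tsum_eq_add_tsum (ν := ν) (fun _ => measurable_from_top)
    (fun _ => measurable_from_top) measurable_from_top
    (fun p => by by_cases hp : Even (p.1 + #p.2) <;> simp [hp, lintegral_isoTerm_eq hmom])
    (fun p => by by_cases hp : Even (p.1 + #p.2) <;> simp [hp, lintegral_isoTerm_eq hmom])
    (tsum_ite_even_isoTerm F) hodd
  rw [lintegral_indicator_const (MeasurableSpace.measurableSet_top),
    lintegral_indicator_const (MeasurableSpace.measurableSet_top)] at key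
  have hc : Nat.card (F ≃g F) ≠ 0 :=
    Nat.card_ne_zero.2 ⟨⟨Iso.refl⟩, Finite.of_injective _ DFunLike.coe_injective⟩
  exact (ENNReal.mul_right_inj (by exact_mod_cast hc) (ENNReal.natCast_ne_top _)).1 key

theorem stmt14_general {Θ Θ' : Type*} [MeasurableSpace Θ] [MeasurableSpace Θ']
    (P : Measure Θ) (P' : Measure Θ')
    (G : Θ → FinGraph) (G' : Θ' → FinGraph) (hG : Measurable G) (hG' : Measurable G')
    (hmom : ∀ (m : ℕ) (F : SimpleGraph (Fin m)),
      ∫⁻ θ, (injCount F (G θ).2 : ℝ≥0∞) ∂P = ∫⁻ θ, (injCount F (G' θ).2 : ℝ≥0∞) ∂P')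
    (ε : ℝ) (hε : 0 < ε)
    (hexp : ∫⁻ θ, ENNReal.ofReal ((2 + ε) ^ (G θ).1) ∂P < ⊤) :
    ∀ (m : ℕ) (F : SimpleGraph (Fin m)),
      P {θ | Nonempty ((G θ).2 ≃g F)} = P' {θ | Nonempty ((G' θ).2 ≃g F)} := by
  intro m F
  have hiso := measure_iso_eq_of_lintegral_injCount_eq (μ := P.map G) (ν := P'.map G')
    (fun k J => by
      rw [lintegral_map measurable_from_top hG, lintegral_map measurable_from_top hG']
      exact hmom k J)
    hε (by rw [lintegral_map measurable_from_top hG]; exact hexp.ne) F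
  rwa [Measure.map_apply hG MeasurableSpace.measurableSet_top,
    Measure.map_apply hG' MeasurableSpace.measurableSet_top] at hiso

/-- Let `G`, `G'` be random finite graphs such that for every finite
graph `F`, `E[inj(F, G)] = E[inj(F, G')]`.  If `X` is the number of vertices of `G` and
`E[(2+ε)^X] < ∞` for some `ε > 0`, then `G` and `G'` have the same distribution up to
isomorphism: `P(G ≅ F) = P'(G' ≅ F)` for every finite graph `F`. -/
theorem stmt14 {Θ Θ' : Type*} [MeasurableSpace Θ] [MeasurableSpace Θ']
    (P : Measure Θ) (P' : Measure Θ') [IsProbabilityMeasure P] [IsProbabilityMeasure P']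
    (G : Θ → FinGraph) (G' : Θ' → FinGraph) (hG : Measurable G) (hG' : Measurable G')
    (hmom : ∀ (m : ℕ) (F : SimpleGraph (Fin m)),
      ∫⁻ θ, (injCount F (G θ).2 : ℝ≥0∞) ∂P = ∫⁻ θ, (injCount F (G' θ).2 : ℝ≥0∞) ∂P')
    (ε : ℝ) (hε : 0 < ε)
    (hexp : ∫⁻ θ, ENNReal.ofReal ((2 + ε) ^ (G θ).1) ∂P < ⊤) :
    ∀ (m : ℕ) (F : SimpleGraph (Fin m)),
      P {θ | Nonempty ((G θ).2 ≃g F)} = P' {θ | Nonempty ((G' θ).2 ≃g F)} :=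
  stmt14_general P P' G G' hG hG' hmom ε hε hexp
end

section
/- Let W be a graphon over a σ-finite measure space with marginal D_W(x) = ∫ W(x,y) dμ(y), and suppose that for every ε > 0 there exists M < ∞ and a measurable subset Ω₀ with μ(Ω₀) ≤ M such that ‖W‖₁ − ‖W|_{Ω₀}‖₁ ≤ ε (uniformly over a family of graphons, uniform tail regularity). Then for every ε > 0 there exists a δ > 0 such that ∫ D_W · 1_{D_W ≤ δ} dμ ≤ ε, uniformly over the family. -/
open MeasureTheory ENNReal
open scoped Classical

/-!
Take `Ω₀` of measure at most `M` carrying all but `ε / 2` of the mass of `W`. Points of `Ω₀`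
with degree at most `δ` contribute at most `δ M`, and points outside `Ω₀` contribute at most
`∫_{Ω₀ᶜ} D_W = ∫_{Ω₀ᶜ × Ω} W ≤ ‖W‖₁ - ‖W|_{Ω₀}‖₁ ≤ ε / 2`; so `δ = ε / (2 max M 1)` works.
-/

section

variable {α : Type*} [MeasurableSpace α] {μ : Measure α}

theorem lintegral_ite_le_le_mul_add_setLIntegral_compl (f : α → ℝ≥0∞) (c : ℝ≥0∞)
    {s : Set α} (hs : MeasurableSet s) :
    ∫⁻ x, (if f x ≤ c then f x else 0) ∂μ ≤ c * μ s + ∫⁻ x in sᶜ, f x ∂μ := by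
  have hpointwise : ∀ x,
      (if f x ≤ c then f x else 0) ≤ s.indicator (fun _ => c) x + sᶜ.indicator f x := by
    intro x
    split_ifs with hfx
    · by_cases hx : x ∈ s
      · simp [hx, hfx]
      · simp [hx]
    · positivity
  calc ∫⁻ x, (if f x ≤ c then f x else 0) ∂μ
      ≤ ∫⁻ x, (s.indicator (fun _ => c) x + sᶜ.indicator f x) ∂μ := lintegral_mono hpointwise
    _ = c * μ s + ∫⁻ x in sᶜ, f x ∂μ := by
      rw [lintegral_add_left (measurable_const.indicator hs), lintegral_indicator hs,
        lintegral_indicator hs.compl, setLIntegral_const, mul_comm]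

theorem setLIntegral_compl_lintegral_le_sub (g : α → α → ℝ≥0∞) {s : Set α}
    (hs : MeasurableSet s) (hg : ∫⁻ x, ∫⁻ y, g x y ∂μ ∂μ < ⊤) :
    ∫⁻ x in sᶜ, ∫⁻ y, g x y ∂μ ∂μ
      ≤ (∫⁻ x, ∫⁻ y, g x y ∂μ ∂μ) - ∫⁻ x in s, ∫⁻ y in s, g x y ∂μ ∂μ := by
  have hrestrict : ∫⁻ x in s, ∫⁻ y in s, g x y ∂μ ∂μ ≤ ∫⁻ x in s, ∫⁻ y, g x y ∂μ ∂μ :=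
    lintegral_mono fun x => setLIntegral_le_lintegral _ _
  have hfinite : ∫⁻ x in s, ∫⁻ y in s, g x y ∂μ ∂μ ≠ ⊤ :=
    (hrestrict.trans_lt ((setLIntegral_le_lintegral _ _).trans_lt hg)).ne
  refine (ENNReal.cancel_of_ne hfinite).le_tsub_of_add_le_left ?_
  calc (∫⁻ x in s, ∫⁻ y in s, g x y ∂μ ∂μ) + ∫⁻ x in sᶜ, ∫⁻ y, g x y ∂μ ∂μ
      ≤ (∫⁻ x in s, ∫⁻ y, g x y ∂μ ∂μ) + ∫⁻ x in sᶜ, ∫⁻ y, g x y ∂μ ∂μ :=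
        add_le_add_left hrestrict _
    _ = ∫⁻ x, ∫⁻ y, g x y ∂μ ∂μ := lintegral_add_compl _ hs

end

theorem ENNReal.ofReal_div_mul_le {a b : ℝ} (ha : 0 ≤ a) (hb : 0 < b) {m : ℝ≥0∞}
    (hm : m ≤ ENNReal.ofReal b) : ENNReal.ofReal (a / b) * m ≤ ENNReal.ofReal a :=
  calc ENNReal.ofReal (a / b) * m ≤ ENNReal.ofReal (a / b) * ENNReal.ofReal b := by gcongr
    _ = ENNReal.ofReal a := by
      rw [← ENNReal.ofReal_mul (div_nonneg ha hb.le), div_mul_cancel₀ _ hb.ne']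

theorem stmt15_general {ι : Type*} {Ω : ι → Type*} [∀ i, MeasurableSpace (Ω i)]
    (μ : ∀ i, Measure (Ω i))
    (W : ∀ i, Ω i → Ω i → ℝ)
    (hint : ∀ i, (∫⁻ x, ∫⁻ y, ENNReal.ofReal (W i x y) ∂μ i ∂μ i) < ⊤)
    (htail : ∀ ε : ℝ, 0 < ε → ∃ M : ℝ, ∀ i, ∃ Ω₀ : Set (Ω i), MeasurableSet Ω₀ ∧
      μ i Ω₀ ≤ ENNReal.ofReal M ∧
      (∫⁻ x, ∫⁻ y, ENNReal.ofReal (W i x y) ∂μ i ∂μ i)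
          - (∫⁻ x in Ω₀, ∫⁻ y in Ω₀, ENNReal.ofReal (W i x y) ∂μ i ∂μ i)
        ≤ ENNReal.ofReal ε) :
    ∀ ε : ℝ, 0 < ε → ∃ δ : ℝ, 0 < δ ∧ ∀ i,
      (∫⁻ x, (if (∫⁻ y, ENNReal.ofReal (W i x y) ∂μ i) ≤ ENNReal.ofReal δ
              then ∫⁻ y, ENNReal.ofReal (W i x y) ∂μ i else 0) ∂μ i)
        ≤ ENNReal.ofReal ε := by
  intro ε hε
  obtain ⟨M, hM⟩ := htail (ε / 2) (half_pos hε)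
  have hM' : 0 < max M 1 := lt_max_of_lt_right one_pos
  refine ⟨ε / 2 / max M 1, div_pos (half_pos hε) hM', fun i => ?_⟩
  obtain ⟨Ω₀, hΩ₀, hμΩ₀, hmass⟩ := hM i
  calc _ ≤ ENNReal.ofReal (ε / 2 / max M 1) * μ i Ω₀
          + ∫⁻ x in Ω₀ᶜ, ∫⁻ y, ENNReal.ofReal (W i x y) ∂μ i ∂μ i :=
        lintegral_ite_le_le_mul_add_setLIntegral_compl _ _ hΩ₀
    _ ≤ ENNReal.ofReal (ε / 2) + ENNReal.ofReal (ε / 2) := by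
        gcongr
        · exact ENNReal.ofReal_div_mul_le (half_pos hε).le hM'
            (hμΩ₀.trans (ENNReal.ofReal_le_ofReal (le_max_left _ _)))
        · exact (setLIntegral_compl_lintegral_le_sub _ hΩ₀ (hint i)).trans hmass
    _ = ENNReal.ofReal ε := by
        rw [← ENNReal.ofReal_add (half_pos hε).le (half_pos hε).le, add_halves]

/-- Let `(W i)` be a family of graphons (symmetric measurable functions
with values in `[0,1]`), each integrable, over σ-finite measure spaces, with marginals
`D_{W i}(x) = ∫ W i x y dμ i (y)`.  Suppose the family is uniformly tail regular: for every
`ε > 0` there is `M < ∞` such that for each `i` there is a measurable `Ω₀` with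
`μ i Ω₀ ≤ M` and `‖W i‖₁ − ‖(W i)|_{Ω₀}‖₁ ≤ ε`.  Then for every `ε > 0` there is `δ > 0`
such that `∫ D_{W i} · 1_{D_{W i} ≤ δ} dμ i ≤ ε` for all `i`. -/
theorem stmt15 {ι : Type*} {Ω : ι → Type*} [∀ i, MeasurableSpace (Ω i)]
    (μ : ∀ i, Measure (Ω i)) [∀ i, SigmaFinite (μ i)]
    (W : ∀ i, Ω i → Ω i → ℝ)
    (hmeas : ∀ i, Measurable (Function.uncurry (W i)))
    (hsymm : ∀ i x y, W i x y = W i y x)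
    (hrange : ∀ i x y, W i x y ∈ Set.Icc (0:ℝ) 1)
    (hint : ∀ i, (∫⁻ x, ∫⁻ y, ENNReal.ofReal (W i x y) ∂μ i ∂μ i) < ⊤)
    (htail : ∀ ε : ℝ, 0 < ε → ∃ M : ℝ, ∀ i, ∃ Ω₀ : Set (Ω i), MeasurableSet Ω₀ ∧
      μ i Ω₀ ≤ ENNReal.ofReal M ∧
      (∫⁻ x, ∫⁻ y, ENNReal.ofReal (W i x y) ∂μ i ∂μ i)
          - (∫⁻ x in Ω₀, ∫⁻ y in Ω₀, ENNReal.ofReal (W i x y) ∂μ i ∂μ i)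
        ≤ ENNReal.ofReal ε) :
    ∀ ε : ℝ, 0 < ε → ∃ δ : ℝ, 0 < δ ∧ ∀ i,
      (∫⁻ x, (if (∫⁻ y, ENNReal.ofReal (W i x y) ∂μ i) ≤ ENNReal.ofReal δ
              then ∫⁻ y, ENNReal.ofReal (W i x y) ∂μ i else 0) ∂μ i)
        ≤ ENNReal.ofReal ε :=
  stmt15_general μ W hint htail
end
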